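/- arXiv:1211.1848 — 10 statements merged into one kernel-verified Lean document; each statement's English description precedes it below -/
import Mathlib

section
/- Let U ⊂ ℝⁿ be open, x₀ ∈ U, k ∈ ℝ, and let v : U → ℂ be smooth with Δv + k²v = 0 on U. Suppose not all iterated partial derivatives of v at x₀ vanish, and let N be the smallest total order of a nonvanishing partial derivative of v at x₀. Then the degree-N homogeneous Taylor polynomial P^N(h) = Σ_{|α|=N} (∂^α v(x₀)/α!) h^α is a harmonic polynomial, i.e. ΔP^N = 0. -/
/-!
Write `D = D^N v(x₀)`. The Laplacian of `h ↦ D(h, …, h)` at `x` is a sum of terms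
`∑ⱼ D(…, eⱼ, …, eⱼ, …)` with the two `eⱼ` in distinct slots and `x` in all others. Since
iterated derivatives of smooth maps are symmetric, each such term equals
`∑ⱼ D^N v(x₀)(x, …, x, eⱼ, eⱼ) = D^{N-2}(Δv)(x₀)(x, …, x) = -k² D^{N-2}v(x₀)(x, …, x)`, which
vanishes by minimality of `N`.

Symmetry of `D^N f(x)` is reduced to symmetry of second derivatives by writing
`D^N f(x)(m₁, …, m_N)` as the iterated directional derivative `∂_{m₁} ⋯ ∂_{m_N} f (x)`, which is
invariant under adjacent transpositions of the directions.
-/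

open scoped ContDiff

/-- The Laplacian of a function `f : ℝⁿ → ℂ`, as the sum of second partial derivatives. -/
noncomputable def lap {n : ℕ} (f : (Fin n → ℝ) → ℂ) (x : Fin n → ℝ) : ℂ :=
  ∑ j : Fin n, fderiv ℝ (fun y => fderiv ℝ f y (Pi.single j 1)) x (Pi.single j 1)

theorem Fin.exists_perm_zero_one_eq {m : ℕ} {i i' : Fin (m + 2)} (h : i ≠ i') :
    ∃ π : Equiv.Perm (Fin (m + 2)), π 0 = i ∧ π 1 = i' := by
  set j := Equiv.swap 0 i i' with hj
  have hj0 : j ≠ 0 := fun h0 => h (by simpa [h0] using congrArg (Equiv.swap 0 i) hj)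
  refine ⟨Equiv.swap 0 i * Equiv.swap 1 j, ?_, ?_⟩
  · simp [Equiv.swap_apply_of_ne_of_ne zero_ne_one hj0.symm]
  · simp [hj]

theorem Fin.cons_cons_const {α : Type*} {m : ℕ} (a b c : α) :
    (Fin.cons a (Fin.cons b fun _ => c) : Fin (m + 2) → α) =
      Function.update (Function.update (fun _ => c) 0 a) 1 b := by
  ext l
  refine Fin.cases ?_ (fun l => Fin.cases ?_ (fun l => ?_) l) l <;> simp [Fin.succ_succ_ne_one]

section IteratedDirDeriv

variable (𝕜 : Type*) {E F : Type*} [RCLike 𝕜] [NormedAddCommGroup E] [NormedSpace 𝕜 E]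
  [NormedAddCommGroup F] [NormedSpace 𝕜 F]

noncomputable def iteratedDirDeriv (l : List E) (f : E → F) : E → F :=
  l.foldr (fun a g y => fderiv 𝕜 g y a) f

variable {𝕜} {U : Set E} {f g : E → F}

@[simp] theorem iteratedDirDeriv_nil : iteratedDirDeriv 𝕜 [] f = f := rfl

@[simp] theorem iteratedDirDeriv_cons (a : E) (l : List E) :
    iteratedDirDeriv 𝕜 (a :: l) f = fun y => fderiv 𝕜 (iteratedDirDeriv 𝕜 l f) y a := rfl

theorem iteratedDirDeriv_append (l₁ l₂ : List E) :
    iteratedDirDeriv 𝕜 (l₁ ++ l₂) f = iteratedDirDeriv 𝕜 l₁ (iteratedDirDeriv 𝕜 l₂ f) :=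
  List.foldr_append

theorem contDiffOn_iteratedDirDeriv (hU : IsOpen U) (hf : ContDiffOn 𝕜 ∞ f U) (l : List E) :
    ContDiffOn 𝕜 ∞ (iteratedDirDeriv 𝕜 l f) U := by
  induction l with
  | nil => exact hf
  | cons a l ih => exact (ih.fderiv_of_isOpen hU le_rfl).clm_apply contDiffOn_const

theorem Set.EqOn.iteratedDirDeriv (hU : IsOpen U) (h : Set.EqOn f g U) (l : List E) :
    Set.EqOn (iteratedDirDeriv 𝕜 l f) (iteratedDirDeriv 𝕜 l g) U := by
  induction l with
  | nil => exact h
  | cons a l ih =>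
    intro y hy
    simp only [iteratedDirDeriv_cons]
    rw [Filter.EventuallyEq.fderiv_eq (Filter.eventually_of_mem (hU.mem_nhds hy) ih)]

theorem fderiv_fderiv_apply_comm {x : E} (hf : ContDiffAt 𝕜 2 f x) (a b : E) :
    fderiv 𝕜 (fun y => fderiv 𝕜 f y b) x a = fderiv 𝕜 (fun y => fderiv 𝕜 f y a) x b := by
  have hdiff : DifferentiableAt 𝕜 (fderiv 𝕜 f) x :=
    (hf.fderiv_right (m := 1) le_rfl).differentiableAt one_ne_zero
  rw [fderiv_clm_apply hdiff (differentiableAt_const b),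
    fderiv_clm_apply hdiff (differentiableAt_const a)]
  simpa using (hf.isSymmSndFDerivAt (by simp)).eq a b

theorem List.Perm.iteratedDirDeriv_eqOn (hU : IsOpen U) (hf : ContDiffOn 𝕜 ∞ f U)
    {l l' : List E} (h : l.Perm l') :
    Set.EqOn (iteratedDirDeriv 𝕜 l f) (iteratedDirDeriv 𝕜 l' f) U := by
  induction h with
  | nil => exact Set.eqOn_refl _ _
  | cons a _ ih => exact ih.iteratedDirDeriv hU [a]
  | swap a b l =>
    intro y hy
    exact fderiv_fderiv_apply_comm
      (((contDiffOn_iteratedDirDeriv hU hf l).contDiffAt (hU.mem_nhds hy)).of_le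
        ENat.LEInfty.out) b a
  | trans _ _ ih₁ ih₂ => exact ih₁.trans ih₂

theorem ContDiffOn.iteratedFDeriv_eq_iteratedDirDeriv (hU : IsOpen U) (hf : ContDiffOn 𝕜 ∞ f U)
    {n : ℕ} (m : Fin n → E) {x : E} (hx : x ∈ U) :
    iteratedFDeriv 𝕜 n f x m = iteratedDirDeriv 𝕜 (List.ofFn m) f x := by
  induction n generalizing x with
  | zero => simp
  | succ n ih =>
    have hdiff : DifferentiableAt 𝕜 (iteratedFDeriv 𝕜 n f) x :=
      ((hf.contDiffAt (hU.mem_nhds hx)).iteratedFDeriv_right (m := 1)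
        (by exact_mod_cast le_top)).differentiableAt one_ne_zero
    calc iteratedFDeriv 𝕜 (n + 1) f x m
        = fderiv 𝕜 (iteratedFDeriv 𝕜 n f) x (m 0) (Fin.tail m) := iteratedFDeriv_succ_apply_left m
      _ = fderiv 𝕜 (fun y => iteratedFDeriv 𝕜 n f y (Fin.tail m)) x (m 0) := by
        simp [fderiv_continuousMultilinear_apply_const hdiff]
      _ = fderiv 𝕜 (iteratedDirDeriv 𝕜 (List.ofFn (Fin.tail m)) f) x (m 0) := by
        rw [Filter.EventuallyEq.fderiv_eq
          (Filter.eventually_of_mem (hU.mem_nhds hx) fun y hy => ih (Fin.tail m) hy)]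
      _ = iteratedDirDeriv 𝕜 (List.ofFn m) f x := by rw [List.ofFn_succ]; rfl

theorem ContDiffOn.iteratedFDeriv_comp_perm (hU : IsOpen U) (hf : ContDiffOn 𝕜 ∞ f U)
    {n : ℕ} (m : Fin n → E) (σ : Equiv.Perm (Fin n)) {x : E} (hx : x ∈ U) :
    iteratedFDeriv 𝕜 n f x (m ∘ σ) = iteratedFDeriv 𝕜 n f x m := by
  rw [hf.iteratedFDeriv_eq_iteratedDirDeriv hU _ hx,
    hf.iteratedFDeriv_eq_iteratedDirDeriv hU _ hx]
  exact (σ.ofFn_comp_perm m).iteratedDirDeriv_eqOn hU hf hx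

theorem ContDiffOn.iteratedFDeriv_cons_cons (hU : IsOpen U) (hf : ContDiffOn 𝕜 ∞ f U)
    {n : ℕ} (a b : E) (m : Fin n → E) {x : E} (hx : x ∈ U) :
    iteratedFDeriv 𝕜 (n + 2) f x (Fin.cons a (Fin.cons b m)) =
      iteratedFDeriv 𝕜 n (iteratedDirDeriv 𝕜 [a, b] f) x m := by
  rw [hf.iteratedFDeriv_eq_iteratedDirDeriv hU _ hx,
    (contDiffOn_iteratedDirDeriv hU hf _).iteratedFDeriv_eq_iteratedDirDeriv hU _ hx,
    ← iteratedDirDeriv_append]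
  refine List.Perm.iteratedDirDeriv_eqOn hU hf ?_ hx
  simpa [List.ofFn_succ] using (List.perm_append_comm (l₁ := [a, b]) (l₂ := List.ofFn m))

theorem ContDiffOn.iteratedFDeriv_update_update (hU : IsOpen U) (hf : ContDiffOn 𝕜 ∞ f U)
    {m : ℕ} {i i' : Fin (m + 2)} (h : i ≠ i') (a b c : E) {x : E} (hx : x ∈ U) :
    iteratedFDeriv 𝕜 (m + 2) f x (Function.update (Function.update (fun _ => c) i a) i' b) =
      iteratedFDeriv 𝕜 (m + 2) f x (Fin.cons a (Fin.cons b fun _ => c)) := by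
  obtain ⟨π, hπ0, hπ1⟩ := Fin.exists_perm_zero_one_eq h
  have hperm : Function.update (Function.update (fun _ => c) i a) i' b =
      (Fin.cons a (Fin.cons b fun _ => c) : Fin (m + 2) → E) ∘ π.symm := by
    rw [Fin.cons_cons_const, Function.update_comp_equiv, Function.update_comp_equiv]
    simp only [Equiv.symm_symm, hπ0, hπ1]
    rfl
  rw [hperm, hf.iteratedFDeriv_comp_perm hU _ _ hx]

end IteratedDirDeriv

namespace ContinuousMultilinearMap

variable {𝕜 ι E G : Type*} [NontriviallyNormedField 𝕜] [Fintype ι] [DecidableEq ι]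
  [NormedAddCommGroup E] [NormedSpace 𝕜 E] [NormedAddCommGroup G] [NormedSpace 𝕜 G]
  (F : ContinuousMultilinearMap 𝕜 (fun _ : ι => E) G)

theorem hasFDerivAt_piecewise_const (s : Finset ι) (w : ι → E) (x : E) :
    HasFDerivAt (fun y => F (s.piecewise (fun _ => y) w))
      ((F.linearDeriv (s.piecewise (fun _ => x) w)).comp
        (ContinuousLinearMap.pi fun i => if i ∈ s then ContinuousLinearMap.id 𝕜 E else 0))
      x := by
  refine (F.hasFDerivAt _).comp x (hasFDerivAt_pi.2 fun i => ?_)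
  by_cases hi : i ∈ s
  · simp only [hi, Finset.piecewise_eq_of_mem, if_true]
    exact hasFDerivAt_id x
  · simpa [hi] using hasFDerivAt_const (w i) x

theorem fderiv_piecewise_const_apply (s : Finset ι) (w : ι → E) (x a : E) :
    fderiv 𝕜 (fun y => F (s.piecewise (fun _ => y) w)) x a =
      ∑ i ∈ s, F (Function.update (s.piecewise (fun _ => x) w) i a) := by
  rw [(F.hasFDerivAt_piecewise_const s w x).fderiv]
  simp only [ContinuousLinearMap.comp_apply, linearDeriv_apply, ContinuousLinearMap.pi_apply]
  rw [← Finset.sum_subset (Finset.subset_univ s)]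
  · refine Finset.sum_congr rfl fun i hi => ?_
    simp [hi]
  · intro i _ hi
    exact F.map_coord_zero i (by simp [hi])

theorem fderiv_fderiv_apply_diagonal (x a b : E) :
    fderiv 𝕜 (fun y => fderiv 𝕜 (fun h => F fun _ => h) y a) x b =
      ∑ i, ∑ i' ∈ Finset.univ.erase i,
        F (Function.update (Function.update (fun _ => x) i a) i' b) := by
  have hfirst : (fun y => fderiv 𝕜 (fun h => F fun _ => h) y a) =
      fun y => ∑ i, F ((Finset.univ.erase i).piecewise (fun _ => y) fun _ => a) := by
    ext y
    simpa using F.fderiv_piecewise_const_apply Finset.univ (fun _ => 0) y a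
  rw [hfirst, fderiv_fun_sum fun i _ => (F.hasFDerivAt_piecewise_const _ _ x).differentiableAt]
  simp only [FunLike.coe_sum, Finset.sum_apply]
  refine Finset.sum_congr rfl fun i _ => ?_
  rw [F.fderiv_piecewise_const_apply, Finset.piecewise_erase_univ]

end ContinuousMultilinearMap

section Laplacian

variable {n : ℕ} {U : Set (Fin n → ℝ)} {v : (Fin n → ℝ) → ℂ} {x₀ : Fin n → ℝ}

theorem lap_apply_diagonal {ι : Type*} [Fintype ι] [DecidableEq ι]
    (F : ContinuousMultilinearMap ℝ (fun _ : ι => Fin n → ℝ) ℂ) (x : Fin n → ℝ) :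
    lap (fun h => F fun _ => h) x = ∑ i, ∑ i' ∈ Finset.univ.erase i, ∑ j : Fin n,
      F (Function.update (Function.update (fun _ => x) i (Pi.single j 1)) i' (Pi.single j 1)) := by
  simp only [lap, F.fderiv_fderiv_apply_diagonal]
  rw [Finset.sum_comm]
  exact Finset.sum_congr rfl fun i _ => Finset.sum_comm

theorem ContDiffOn.sum_iteratedFDeriv_cons_cons_single_eq_lap (hU : IsOpen U)
    (hv : ContDiffOn ℝ ∞ v U) (hx₀ : x₀ ∈ U) {m : ℕ} (w : Fin m → Fin n → ℝ) :
    ∑ j : Fin n,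
        iteratedFDeriv ℝ (m + 2) v x₀ (Fin.cons (Pi.single j 1) (Fin.cons (Pi.single j 1) w)) =
      iteratedFDeriv ℝ m (lap v) x₀ w := by
  simp_rw [hv.iteratedFDeriv_cons_cons hU _ _ _ hx₀]
  rw [← sum_apply, ← iteratedFDeriv_fun_sum_apply fun j _ =>
    ((contDiffOn_iteratedDirDeriv hU hv _).contDiffAt (hU.mem_nhds hx₀)).of_le ENat.LEInfty.out]
  rfl

theorem iteratedFDeriv_lap_eq_smul (hU : IsOpen U) (hv : ContDiffOn ℝ ∞ v U) (hx₀ : x₀ ∈ U)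
    {c : ℂ} (hlap : Set.EqOn (lap v) (fun x => c * v x) U) (m : ℕ) :
    iteratedFDeriv ℝ m (lap v) x₀ = c • iteratedFDeriv ℝ m v x₀ := by
  have hlap_nhds : lap v =ᶠ[nhds x₀] fun x => c * v x :=
    Filter.eventually_of_mem (hU.mem_nhds hx₀) hlap
  rw [(hlap_nhds.iteratedFDeriv ℝ m).eq_of_nhds]
  exact iteratedFDeriv_const_smul_apply (a := c)
    ((hv.contDiffAt (hU.mem_nhds hx₀)).of_le ENat.LEInfty.out)

end Laplacian

theorem taylor_leading_term_harmonic_general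
    (n : ℕ) (U : Set (Fin n → ℝ)) (hU : IsOpen U)
    (x₀ : Fin n → ℝ) (hx₀ : x₀ ∈ U) (k : ℝ)
    (v : (Fin n → ℝ) → ℂ) (hv : ContDiffOn ℝ (⊤ : ℕ∞) v U)
    (hHelm : ∀ x ∈ U, lap v x + (k : ℂ) ^ 2 * v x = 0)
    (N : ℕ)
    (hNmin : ∀ j < N, iteratedFDeriv ℝ j v x₀ = 0) :
    ∀ x : Fin n → ℝ,
      lap (fun h => ((N.factorial : ℂ))⁻¹ • iteratedFDeriv ℝ N v x₀ (fun _ => h)) x = 0 := by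
  intro x
  have hlap : Set.EqOn (lap v) (fun y => -(k : ℂ) ^ 2 * v y) U := fun y hy => by
    simpa [neg_mul] using eq_neg_of_add_eq_zero_left (hHelm y hy)
  have hpair : ∀ i i' : Fin N, i ≠ i' → ∑ j : Fin n, iteratedFDeriv ℝ N v x₀
      (Function.update (Function.update (fun _ => x) i (Pi.single j 1)) i' (Pi.single j 1)) =
        0 := by
    intro i i' hii'
    obtain ⟨m, rfl⟩ : ∃ m, N = m + 2 := ⟨N - 2, by have := Fin.val_ne_of_ne hii'; omega⟩
    simp_rw [hv.iteratedFDeriv_update_update hU hii' _ _ _ hx₀,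
      hv.sum_iteratedFDeriv_cons_cons_single_eq_lap hU hx₀,
      iteratedFDeriv_lap_eq_smul hU hv hx₀ hlap, hNmin m (by omega), smul_zero, zero_apply]
  rw [show (fun h => ((N.factorial : ℂ))⁻¹ • iteratedFDeriv ℝ N v x₀ (fun _ => h)) =
      fun h => (((N.factorial : ℂ))⁻¹ • iteratedFDeriv ℝ N v x₀) (fun _ => h) from rfl,
    lap_apply_diagonal]
  simp only [smul_apply, ← Finset.smul_sum]
  exact smul_eq_zero_of_right _ (Finset.sum_eq_zero fun i _ => Finset.sum_eq_zero fun i' hi' =>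
    hpair i i' (Finset.ne_of_mem_erase hi').symm)

/-- If `v` is a smooth solution of the Helmholtz equation `Δv + k²v = 0` on an open set `U`,
not all of whose derivatives vanish at `x₀ ∈ U`, and `N` is the smallest order of a
nonvanishing derivative at `x₀`, then the degree-`N` homogeneous Taylor polynomial
`h ↦ (1/N!)·D^N v(x₀)[h,…,h]` is harmonic. -/
theorem taylor_leading_term_harmonic
    (n : ℕ) (U : Set (Fin n → ℝ)) (hU : IsOpen U)
    (x₀ : Fin n → ℝ) (hx₀ : x₀ ∈ U) (k : ℝ)
    (v : (Fin n → ℝ) → ℂ) (hv : ContDiffOn ℝ (⊤ : ℕ∞) v U)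
    (hHelm : ∀ x ∈ U, lap v x + (k : ℂ) ^ 2 * v x = 0)
    (N : ℕ)
    (hN : iteratedFDeriv ℝ N v x₀ ≠ 0)
    (hNmin : ∀ j < N, iteratedFDeriv ℝ j v x₀ = 0) :
    ∀ x : Fin n → ℝ,
      lap (fun h => ((N.factorial : ℂ))⁻¹ • iteratedFDeriv ℝ N v x₀ (fun _ => h)) x = 0 :=
  taylor_leading_term_harmonic_general n U hU x₀ hx₀ k v hv hHelm N hNmin
end

section
/- Let n ≥ 1, N ≥ 0, let R be a homogeneous polynomial of degree N on ℝⁿ with complex coefficients, let 1 ≤ p ≤ ∞ and let τ > 0. There exists a constant C such that for every nonzero ρ ∈ ℂⁿ with Re ρ_j ≥ τ|ρ| for every j = 1,…,n, and every f ∈ L^p((0,∞)ⁿ), the integrand e^{−x·ρ} R(x) f(x) is integrable over the positive orthant and |∫_{(0,∞)ⁿ} e^{−x·ρ} R(x) f(x) dx| ≤ C |ρ|^{−(N+n)+n/p} ‖f‖_{L^p((0,∞)ⁿ)}. -/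
open MeasureTheory
open scoped ENNReal

/-!
On the orthant the kernel `e^{-x·ρ} R(x)` is dominated by `|ρ|^{-N} e^{-τ|ρ| Σ xⱼ / 2}` up to a
constant: `|e^{-x·ρ}| ≤ e^{-τ|ρ| Σ xⱼ}`, homogeneity gives `|R(x)| ≲ (Σ xⱼ)^N`, and
`s^N e^{-bs} ≲ b^{-N} e^{-bs/2}`. By Fubini, `e^{-a Σ xⱼ}` has `L^q` norm `(qa)^{-n/q}` on the
orthant, so Hölder's inequality with the conjugate exponent `q` of `p` yields the factor
`|ρ|^{-N-n/q} = |ρ|^{-(N+n)+n/p}`.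
-/

section

open Real Set

theorem norm_integral_mul_le_eLpNorm_mul_eLpNorm {α 𝕜 : Type*} [MeasurableSpace α] [RCLike 𝕜]
    {μ : Measure α} {p q : ℝ≥0∞} [p.HolderConjugate q] {f g : α → 𝕜}
    (hf : MemLp f p μ) (hg : MemLp g q μ) :
    ‖∫ x, f x * g x ∂μ‖ ≤ (eLpNorm f p μ).toReal * (eLpNorm g q μ).toReal := by
  rw [← ENNReal.toReal_mul, ← toReal_enorm]
  refine ENNReal.toReal_mono (ENNReal.mul_ne_top hf.2.ne hg.2.ne) ?_
  calc ‖∫ x, f x * g x ∂μ‖ₑ ≤ ∫⁻ x, ‖f x * g x‖ₑ ∂μ := enorm_integral_le_lintegral_enorm _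
    _ = eLpNorm (f • g) 1 μ := by
        simp only [eLpNorm_one_eq_lintegral_enorm, smul_eq_mul, Pi.mul_apply]
    _ ≤ _ := eLpNorm_smul_le_mul_eLpNorm hg.1 hf.1

/-- Since `∞.toReal⁻¹ = 0`, this also covers the pair `1, ∞`. -/
theorem ENNReal.HolderConjugate.inv_toReal_add_inv_toReal (p q : ℝ≥0∞) [p.HolderConjugate q] :
    p.toReal⁻¹ + q.toReal⁻¹ = 1 := by
  have h := congrArg ENNReal.toReal (ENNReal.HolderConjugate.inv_add_inv_eq_one p q)
  rwa [ENNReal.toReal_add (ENNReal.inv_ne_top.2 (ENNReal.HolderConjugate.ne_zero p q))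
    (ENNReal.inv_ne_top.2 (ENNReal.HolderConjugate.ne_zero q p)), ENNReal.toReal_inv,
    ENNReal.toReal_inv, ENNReal.toReal_one] at h

theorem pow_mul_exp_neg_le (N : ℕ) {b s : ℝ} (hb : 0 < b) (hs : 0 ≤ s) :
    s ^ N * exp (-(b * s)) ≤ N.factorial * (2 / b) ^ N * exp (-(b / 2 * s)) := by
  have hfact := pow_div_factorial_le_exp (x := b / 2 * s) (by positivity) N
  rw [div_le_iff₀ (by positivity)] at hfact
  calc s ^ N * exp (-(b * s)) = (2 / b) ^ N * (b / 2 * s) ^ N * exp (-(b * s)) := by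
        rw [← mul_pow]; field_simp
    _ ≤ (2 / b) ^ N * (exp (b / 2 * s) * N.factorial) * exp (-(b * s)) := by gcongr
    _ = N.factorial * (2 / b) ^ N * exp (-(b / 2 * s)) := by
        rw [mul_comm (exp _), mul_assoc, mul_assoc, ← exp_add]; ring_nf

theorem two_div_pow_mul_div_two_rpow_neg {b : ℝ} (hb : 0 < b) (N : ℕ) (e : ℝ) :
    (2 / b) ^ N * (b / 2) ^ (-e) = 2 ^ ((N : ℝ) + e) * b ^ (-(N : ℝ) - e) := by
  have h2e : 0 < (2 : ℝ) ^ e := rpow_pos_of_pos two_pos e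
  have hbe : 0 < b ^ e := rpow_pos_of_pos hb e
  rw [← rpow_natCast, div_rpow zero_le_two hb.le, div_rpow hb.le zero_le_two, rpow_neg hb.le,
    rpow_neg zero_le_two, rpow_add two_pos, rpow_sub hb, rpow_neg hb.le]
  field_simp

def orthant (ι : Type*) : Set (ι → ℝ) := {x | ∀ j, 0 < x j}

variable {ι : Type*}

theorem orthant_eq_pi : orthant ι = Set.univ.pi fun _ => Ioi 0 := by
  ext x; simp [orthant]

theorem measurableSet_orthant [Countable ι] : MeasurableSet (orthant ι) := by
  rw [orthant_eq_pi]
  exact .univ_pi fun _ => measurableSet_Ioi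

variable [Fintype ι]

theorem norm_cexp_neg_sum_mul_le {ρ : ι → ℂ} {b : ℝ} (hρ : ∀ j, b ≤ (ρ j).re) {x : ι → ℝ}
    (hx : ∀ j, 0 ≤ x j) :
    ‖Complex.exp (-(∑ j, (x j : ℂ) * ρ j))‖ ≤ exp (-(b * ∑ j, x j)) := by
  rw [Complex.norm_exp, exp_le_exp, Complex.neg_re, neg_le_neg_iff, Complex.re_sum, Finset.mul_sum]
  refine Finset.sum_le_sum fun j _ => ?_
  rw [Complex.re_ofReal_mul, mul_comm]
  exact mul_le_mul_of_nonneg_left (hρ j) (hx j)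

theorem MvPolynomial.IsHomogeneous.norm_eval_le {R : MvPolynomial ι ℂ} {N : ℕ}
    (hR : R.IsHomogeneous N) {x : ι → ℝ} (hx : ∀ j, 0 ≤ x j) :
    ‖MvPolynomial.eval (fun j => (x j : ℂ)) R‖ ≤
      (∑ d ∈ R.support, ‖MvPolynomial.coeff d R‖) * (∑ j, x j) ^ N := by
  rw [MvPolynomial.eval_eq', Finset.sum_mul]
  refine (norm_sum_le _ _).trans (Finset.sum_le_sum fun d hd => ?_)
  rw [norm_mul]
  refine mul_le_mul_of_nonneg_left ?_ (norm_nonneg _)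
  have hdeg : ∑ j, d j = N := by
    rw [← hR (MvPolynomial.mem_support_iff.mp hd)]
    simp [Finsupp.weight_apply, Finsupp.sum_fintype]
  calc ‖∏ j, (x j : ℂ) ^ d j‖ = ∏ j, x j ^ d j := by
        simp only [norm_prod, norm_pow, Complex.norm_real, norm_of_nonneg (hx _)]
    _ ≤ ∏ j, (∑ i, x i) ^ d j :=
        Finset.prod_le_prod (fun j _ => pow_nonneg (hx j) _) fun j _ =>
          pow_le_pow_left₀ (hx j) (Finset.single_le_sum (fun i _ => hx i) (Finset.mem_univ j)) _
    _ = (∑ j, x j) ^ N := by rw [Finset.prod_pow_eq_pow_sum, hdeg]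

theorem volume_restrict_orthant :
    volume.restrict (orthant ι) = Measure.pi fun _ => volume.restrict (Ioi 0) := by
  rw [orthant_eq_pi, volume_pi, Measure.restrict_pi_pi]

theorem lintegral_exp_neg_mul_sum_orthant {b : ℝ} (hb : 0 < b) :
    ∫⁻ x in orthant ι, ENNReal.ofReal (exp (-(b * ∑ j, x j))) =
      ENNReal.ofReal (b⁻¹ ^ Fintype.card ι) := by
  have hexp : ∀ x : ι → ℝ, exp (-(b * ∑ j, x j)) = ∏ j, exp (-b * x j) := by
    intro x
    rw [← exp_sum, Finset.mul_sum, ← Finset.sum_neg_distrib]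
    simp only [neg_mul]
  have h1 : Integrable (fun t => exp (-b * t)) (volume.restrict (Ioi 0)) :=
    exp_neg_integrableOn_Ioi 0 hb
  simp_rw [hexp, volume_restrict_orthant]
  rw [← ofReal_integral_eq_lintegral_ofReal (Integrable.fintype_prod fun _ => h1)
    (.of_forall fun x => by positivity), integral_fintype_prod_eq_pow (fun t => exp (-b * t)),
    integral_exp_mul_Ioi (by linarith) 0]
  simp [neg_div, div_neg]

theorem eLpNorm_exp_neg_mul_sum_orthant {q : ℝ≥0∞} (hq0 : q ≠ 0) (hq : q ≠ ∞) {a : ℝ}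
    (ha : 0 < a) :
    eLpNorm (fun x : ι → ℝ => exp (-(a * ∑ j, x j))) q (volume.restrict (orthant ι)) =
      ENNReal.ofReal ((q.toReal * a) ^ (-(Fintype.card ι / q.toReal))) := by
  have hqr : 0 < q.toReal := ENNReal.toReal_pos hq0 hq
  have hpow : ∀ x : ι → ℝ, ‖exp (-(a * ∑ j, x j))‖ₑ ^ q.toReal =
      ENNReal.ofReal (exp (-(q.toReal * a * ∑ j, x j))) := by
    intro x
    rw [← ofReal_norm, norm_of_nonneg (exp_pos _).le,
      ENNReal.ofReal_rpow_of_nonneg (exp_pos _).le hqr.le, ← exp_mul]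
    ring_nf
  rw [eLpNorm_eq_lintegral_rpow_enorm_toReal hq0 hq, lintegral_congr hpow,
    lintegral_exp_neg_mul_sum_orthant (by positivity),
    ENNReal.ofReal_rpow_of_nonneg (by positivity) (by positivity), ← rpow_natCast,
    ← rpow_mul (by positivity), inv_rpow (by positivity), ← rpow_neg (by positivity)]
  ring_nf

theorem exists_eLpNorm_exp_neg_mul_sum_orthant_le (q : ℝ≥0∞) :
    ∃ C, 0 ≤ C ∧ ∀ a > 0,
      eLpNorm (fun x : ι → ℝ => exp (-(a * ∑ j, x j))) q (volume.restrict (orthant ι)) ≤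
        ENNReal.ofReal (C * a ^ (-(Fintype.card ι / q.toReal))) := by
  rcases eq_or_ne q 0 with rfl | hq0
  · exact ⟨0, le_rfl, fun a _ => by simp⟩
  rcases eq_or_ne q ∞ with rfl | hq
  · refine ⟨1, zero_le_one, fun a ha => ?_⟩
    simp only [ENNReal.toReal_top, div_zero, neg_zero, rpow_zero, mul_one]
    rw [eLpNorm_exponent_top]
    refine eLpNormEssSup_le_of_ae_bound <| ae_restrict_of_forall_mem measurableSet_orthant
      fun x hx => ?_
    rw [norm_of_nonneg (exp_pos _).le, exp_le_one_iff, neg_nonpos]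
    exact mul_nonneg ha.le (Finset.sum_nonneg fun j _ => (hx j).le)
  · refine ⟨q.toReal ^ (-(Fintype.card ι / q.toReal)), by positivity, fun a ha => ?_⟩
    rw [eLpNorm_exp_neg_mul_sum_orthant hq0 hq ha,
      mul_rpow ENNReal.toReal_nonneg ha.le]

noncomputable def laplaceKernel (R : MvPolynomial ι ℂ) (ρ : ι → ℂ) (x : ι → ℝ) : ℂ :=
  Complex.exp (-(∑ j, (x j : ℂ) * ρ j)) * MvPolynomial.eval (fun j => (x j : ℂ)) R

theorem continuous_laplaceKernel (R : MvPolynomial ι ℂ) (ρ : ι → ℂ) :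
    Continuous (laplaceKernel R ρ) := by
  unfold laplaceKernel
  have := MvPolynomial.continuous_eval R
  fun_prop

theorem norm_laplaceKernel_le {R : MvPolynomial ι ℂ} {N : ℕ} (hR : R.IsHomogeneous N)
    {ρ : ι → ℂ} {b : ℝ} (hb : 0 < b) (hρ : ∀ j, b ≤ (ρ j).re) {x : ι → ℝ} (hx : ∀ j, 0 ≤ x j) :
    ‖laplaceKernel R ρ x‖ ≤ (∑ d ∈ R.support, ‖MvPolynomial.coeff d R‖) * N.factorial *
      (2 / b) ^ N * exp (-(b / 2 * ∑ j, x j)) := by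
  set c := ∑ d ∈ R.support, ‖MvPolynomial.coeff d R‖
  set s := ∑ j, x j
  calc ‖laplaceKernel R ρ x‖ ≤ exp (-(b * s)) * (c * s ^ N) :=
        (norm_mul _ _).trans_le <| mul_le_mul (norm_cexp_neg_sum_mul_le hρ hx)
          (hR.norm_eval_le hx) (norm_nonneg _) (exp_pos _).le
    _ = c * (s ^ N * exp (-(b * s))) := by ring
    _ ≤ c * (N.factorial * (2 / b) ^ N * exp (-(b / 2 * s))) :=
        mul_le_mul_of_nonneg_left (pow_mul_exp_neg_le N hb (Finset.sum_nonneg fun j _ => hx j))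
          (by positivity)
    _ = c * N.factorial * (2 / b) ^ N * exp (-(b / 2 * s)) := by ring

theorem exists_eLpNorm_laplaceKernel_le {R : MvPolynomial ι ℂ} {N : ℕ} (hR : R.IsHomogeneous N)
    (q : ℝ≥0∞) :
    ∃ C, 0 ≤ C ∧ ∀ b > 0, ∀ ρ : ι → ℂ, (∀ j, b ≤ (ρ j).re) →
      eLpNorm (laplaceKernel R ρ) q (volume.restrict (orthant ι)) ≤
        ENNReal.ofReal (C * b ^ (-(N : ℝ) - Fintype.card ι / q.toReal)) := by
  obtain ⟨C₀, hC₀, hw⟩ := exists_eLpNorm_exp_neg_mul_sum_orthant_le (ι := ι) q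
  set c := ∑ d ∈ R.support, ‖MvPolynomial.coeff d R‖
  set e := (Fintype.card ι : ℝ) / q.toReal
  refine ⟨c * N.factorial * C₀ * 2 ^ ((N : ℝ) + e), by positivity, fun b hb ρ hρ => ?_⟩
  set K := c * N.factorial * (2 / b) ^ N
  have hK : 0 ≤ K := by positivity
  calc eLpNorm (laplaceKernel R ρ) q (volume.restrict (orthant ι))
      ≤ eLpNorm (K • fun x : ι → ℝ => exp (-(b / 2 * ∑ j, x j))) q
          (volume.restrict (orthant ι)) :=
        eLpNorm_mono_ae_real <| ae_restrict_of_forall_mem measurableSet_orthant fun x hx =>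
          norm_laplaceKernel_le hR hb hρ fun j => (hx j).le
    _ ≤ ENNReal.ofReal K * ENNReal.ofReal (C₀ * (b / 2) ^ (-e)) := by
        rw [← enorm_of_nonneg hK]
        exact eLpNorm_const_smul_le.trans (by gcongr; exact hw _ (half_pos hb))
    _ = ENNReal.ofReal (c * N.factorial * C₀ * 2 ^ ((N : ℝ) + e) * b ^ (-(N : ℝ) - e)) := by
        rw [← ENNReal.ofReal_mul hK]
        congr 1
        linear_combination (c * N.factorial * C₀) * two_div_pow_mul_div_two_rpow_neg hb N e

end

theorem laplace_polynomial_Lp_estimate_general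
    (n N : ℕ)
    (R : MvPolynomial (Fin n) ℂ) (hR : R.IsHomogeneous N)
    (p : ℝ≥0∞) (hp : 1 ≤ p) (τ : ℝ) (hτ : 0 < τ) :
    ∃ C : ℝ, ∀ ρ : EuclideanSpace ℂ (Fin n), ρ ≠ 0 →
      (∀ j, τ * ‖ρ‖ ≤ (ρ j).re) →
      ∀ f : (Fin n → ℝ) → ℂ,
        MemLp f p (volume.restrict {x : Fin n → ℝ | ∀ j, 0 < x j}) →
        IntegrableOn
          (fun x : Fin n → ℝ => Complex.exp (-(∑ j, (x j : ℂ) * ρ j)) *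
            MvPolynomial.eval (fun j => ((x j : ℝ) : ℂ)) R * f x)
          {x : Fin n → ℝ | ∀ j, 0 < x j} ∧
        ‖∫ x in {x : Fin n → ℝ | ∀ j, 0 < x j},
            Complex.exp (-(∑ j, (x j : ℂ) * ρ j)) *
              MvPolynomial.eval (fun j => ((x j : ℝ) : ℂ)) R * f x‖ ≤
          C * ‖ρ‖ ^ (-((N : ℝ) + n) + n / p.toReal) *
            (eLpNorm f p (volume.restrict {x : Fin n → ℝ | ∀ j, 0 < x j})).toReal := by
  obtain ⟨q, hpq⟩ : ∃ q, p.HolderConjugate q := ⟨_, .conjExponent hp⟩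
  obtain ⟨C, hC0, hC⟩ := exists_eLpNorm_laplaceKernel_le hR q
  have hexp : -((N : ℝ) + n) + n / p.toReal = -(N : ℝ) - n / q.toReal := by
    linear_combination (n : ℝ) * hpq.inv_toReal_add_inv_toReal
  refine ⟨C * τ ^ (-(N : ℝ) - n / q.toReal), fun ρ hρ hre f hf => ?_⟩
  have hb : 0 < τ * ‖ρ‖ := mul_pos hτ (norm_pos_iff.2 hρ)
  have hK := hC _ hb ρ.ofLp hre
  simp only [Fintype.card_fin] at hK
  have hKq : MemLp (laplaceKernel R ρ.ofLp) q (volume.restrict (orthant (Fin n))) :=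
    ⟨(continuous_laplaceKernel R _).aestronglyMeasurable, hK.trans_lt ENNReal.ofReal_lt_top⟩
  refine ⟨hKq.integrable_mul hf, ?_⟩
  calc _ ≤ _ := norm_integral_mul_le_eLpNorm_mul_eLpNorm hKq hf
    _ ≤ C * (τ * ‖ρ‖) ^ (-(N : ℝ) - n / q.toReal) * _ := by
        gcongr
        exact ENNReal.toReal_le_of_le_ofReal (by positivity) hK
    -- `rfl` unfolds `orthant (Fin n)` to the set written in the statement
    _ = _ := by rw [Real.mul_rpow hτ.le (norm_nonneg _), hexp, ← mul_assoc]; rfl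

/-- Decay estimate for the Laplace-type integral of a homogeneous polynomial of degree `N`
times an `L^p` function over the positive orthant:
`|∫ e^{-x·ρ} R(x) f(x) dx| ≤ C |ρ|^{-(N+n)+n/p} ‖f‖_{L^p}` whenever `Re ρⱼ ≥ τ|ρ|` for all `j`. -/
theorem laplace_polynomial_Lp_estimate
    (n N : ℕ) (hn : 1 ≤ n)
    (R : MvPolynomial (Fin n) ℂ) (hR : R.IsHomogeneous N)
    (p : ℝ≥0∞) (hp : 1 ≤ p) (τ : ℝ) (hτ : 0 < τ) :
    ∃ C : ℝ, ∀ ρ : EuclideanSpace ℂ (Fin n), ρ ≠ 0 →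
      (∀ j, τ * ‖ρ‖ ≤ (ρ j).re) →
      ∀ f : (Fin n → ℝ) → ℂ,
        MemLp f p (volume.restrict {x : Fin n → ℝ | ∀ j, 0 < x j}) →
        IntegrableOn
          (fun x : Fin n → ℝ => Complex.exp (-(∑ j, (x j : ℂ) * ρ j)) *
            MvPolynomial.eval (fun j => ((x j : ℝ) : ℂ)) R * f x)
          {x : Fin n → ℝ | ∀ j, 0 < x j} ∧
        ‖∫ x in {x : Fin n → ℝ | ∀ j, 0 < x j},
            Complex.exp (-(∑ j, (x j : ℂ) * ρ j)) *
              MvPolynomial.eval (fun j => ((x j : ℝ) : ℂ)) R * f x‖ ≤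
          C * ‖ρ‖ ^ (-((N : ℝ) + n) + n / p.toReal) *
            (eLpNorm f p (volume.restrict {x : Fin n → ℝ | ∀ j, 0 < x j})).toReal :=
  laplace_polynomial_Lp_estimate_general n N R hR p hp τ hτ
end

section
/- Let n ≥ 2 and let P be a harmonic homogeneous polynomial of degree N on ℝⁿ with complex coefficients, with associated polynomial Q ∈ ℂ[η₁,…,η_n]. Then there exist polynomials P_î and Q_î in ℂ[η₁,…,η_n] for i = 1,…,n, where P_î is homogeneous of degree N+2n−2, Q_î is homogeneous of degree N+2n−3, and both P_î and Q_î are independent of the variable η_i, such that the polynomial identity σ_{n−1}(η²)·Q(η) = σ_n(η)·Σ_{i=1}^n (P_î + η_i Q_î) holds in ℂ[η₁,…,η_n]. -/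
open MvPolynomial

/-- The polynomial `Q(η) = Σ_{|α|=N} α! p_α η^{α+1}` associated to a polynomial
`P(x) = Σ p_α x^α`. -/
noncomputable def assocPoly (n : ℕ) (P : MvPolynomial (Fin n) ℂ) : MvPolynomial (Fin n) ℂ :=
  ∑ α ∈ P.support,
    monomial (α + Finsupp.equivFunOnFinite.symm fun _ => 1)
      ((∏ j, ((α j).factorial : ℂ)) * P.coeff α)

/-- `σ_{n-1}(η²) = Σᵢ ∏_{j≠i} ηⱼ²`. -/
noncomputable def sigmaSq (n : ℕ) : MvPolynomial (Fin n) ℂ :=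
  ∑ i : Fin n, ∏ j ∈ Finset.univ.erase i, (X j) ^ 2

/-- `σₙ(η) = ∏ⱼ ηⱼ`. -/
noncomputable def sigmaN (n : ℕ) : MvPolynomial (Fin n) ℂ :=
  ∏ j : Fin n, X j

/-- A polynomial is independent of the variable `i` if no monomial of it contains that
variable. -/
def IndepOf {n : ℕ} (i : Fin n) (p : MvPolynomial (Fin n) ℂ) : Prop :=
  ∀ d ∈ p.support, d i = 0

/-!
Since `σₙ(η) = η^𝟙`, the associated polynomial is `Q = σₙ · R` with `R = Σ α! p_α η^α`, so it
suffices to write `S = σ_{n-1}(η²) · R` as `Σᵢ (P_î + ηᵢ Q_î)`. For `γ ∈ ℕⁿ` the coefficient of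
`η^(γ+2)` in `S` is `Σᵢ (γ + 2eᵢ)! p_{γ+2eᵢ} = γ! · [η^γ] ΔP`, which vanishes for harmonic `P`.
Hence every monomial of `S` has some exponent `≤ 1`; it goes into `P_î` if that exponent is `0`
and into `ηᵢ Q_î` if it is `1`.
-/

namespace MvPolynomial

variable {σ R : Type*} [CommSemiring R]

theorem coeff_pderiv_pderiv (i : σ) (p : MvPolynomial σ R) (γ : σ →₀ ℕ) :
    coeff γ (pderiv i (pderiv i p)) =
      ((γ i + 1) * (γ i + 2)) * coeff (γ + Finsupp.single i 2) p := by
  classical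
  rw [coeff_pderiv, coeff_pderiv, add_assoc, ← Finsupp.single_add]
  simp only [Finsupp.add_apply, Finsupp.single_eq_same]
  push_cast
  ring

variable [Fintype σ]

noncomputable def scaleByFactorial (P : MvPolynomial σ R) : MvPolynomial σ R :=
  ∑ α ∈ P.support, monomial α ((∏ j, ((α j).factorial : R)) * P.coeff α)

theorem coeff_scaleByFactorial (P : MvPolynomial σ R) (α : σ →₀ ℕ) :
    coeff α (scaleByFactorial P) = (∏ j, ((α j).factorial : R)) * coeff α P := by
  classical
  rw [scaleByFactorial, coeff_sum]
  simp only [coeff_monomial, Finset.sum_ite_eq', mem_support_iff, ne_eq, ite_not]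
  split_ifs with h <;> simp [h]

theorem IsHomogeneous.scaleByFactorial {P : MvPolynomial σ R} {N : ℕ} (hP : P.IsHomogeneous N) :
    (scaleByFactorial P).IsHomogeneous N :=
  IsHomogeneous.sum _ _ _ fun _ hα =>
    isHomogeneous_monomial _ (hP.degree_eq_sum_deg_support hα).symm

end MvPolynomial

theorem Finsupp.prod_factorial_add_single_two {σ : Type*} [Fintype σ] [DecidableEq σ]
    (γ : σ →₀ ℕ) (i : σ) :
    ∏ j, ((γ + single i 2 : σ →₀ ℕ) j).factorial =
      ((γ i + 1) * (γ i + 2)) * ∏ j, (γ j).factorial := by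
  calc ∏ j, ((γ + single i 2 : σ →₀ ℕ) j).factorial
      = ∏ j, (if j = i then (γ j + 1) * (γ j + 2) else 1) * (γ j).factorial := by
        refine Finset.prod_congr rfl fun j _ => ?_
        rcases eq_or_ne j i with rfl | hj
        · simp [Nat.factorial_succ]; ring
        · simp [hj]
    _ = ((γ i + 1) * (γ i + 2)) * ∏ j, (γ j).factorial := by
        rw [Finset.prod_mul_distrib, Finset.prod_ite_eq']; simp

theorem sigmaN_eq_monomial (n : ℕ) :
    sigmaN n = monomial (Finsupp.equivFunOnFinite.symm fun _ => 1) 1 := by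
  have h := prod_X_pow (R := ℂ) (fun (_ : Fin n) => 1) Finset.univ
  simp only [pow_one] at h
  rw [sigmaN, h]
  congr 2
  ext k
  simp

theorem assocPoly_eq_sigmaN_mul (n : ℕ) (P : MvPolynomial (Fin n) ℂ) :
    assocPoly n P = sigmaN n * scaleByFactorial P := by
  rw [assocPoly, scaleByFactorial, sigmaN_eq_monomial, Finset.mul_sum]
  refine Finset.sum_congr rfl fun α _ => ?_
  rw [monomial_mul, one_mul, add_comm]

theorem sigmaSq_isHomogeneous (n : ℕ) : (sigmaSq n).IsHomogeneous (2 * n - 2) := by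
  refine IsHomogeneous.sum _ _ _ fun i _ => ?_
  have h := IsHomogeneous.prod (Finset.univ.erase i) (fun j => (X j : MvPolynomial (Fin n) ℂ) ^ 2)
    (fun _ => 2) (fun j _ => isHomogeneous_X_pow j 2)
  convert h using 1
  rw [Finset.sum_const, Finset.card_erase_of_mem (Finset.mem_univ i), Finset.card_univ,
    Fintype.card_fin, smul_eq_mul]
  omega

theorem coeff_add_two_sigmaSq_mul {n : ℕ} (p : MvPolynomial (Fin n) ℂ) (γ : Fin n →₀ ℕ) :
    coeff (γ + Finsupp.equivFunOnFinite.symm fun _ => 2) (sigmaSq n * p) =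
      ∑ i, coeff (γ + Finsupp.single i 2) p := by
  rw [sigmaSq, Finset.sum_mul, coeff_sum]
  refine Finset.sum_congr rfl fun i _ => ?_
  have hprod := prod_X_pow (R := ℂ) (fun (_ : Fin n) => 2) (Finset.univ.erase i)
  have hexp : γ + Finsupp.equivFunOnFinite.symm (fun _ => 2) =
      Finsupp.indicator (Finset.univ.erase i) (fun _ _ => 2) + (γ + Finsupp.single i 2) := by
    ext k
    rcases eq_or_ne k i with rfl | hk
    · simp [Finsupp.indicator_apply]
    · simp [Finsupp.indicator_apply, hk, add_comm]
  rw [hprod, hexp, coeff_monomial_mul, one_mul]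

theorem coeff_add_two_sigmaSq_mul_scaleByFactorial {n : ℕ} (P : MvPolynomial (Fin n) ℂ)
    (γ : Fin n →₀ ℕ) :
    coeff (γ + Finsupp.equivFunOnFinite.symm fun _ => 2) (sigmaSq n * scaleByFactorial P) =
      (∏ j, ((γ j).factorial : ℂ)) * coeff γ (∑ j, pderiv j (pderiv j P)) := by
  rw [coeff_add_two_sigmaSq_mul, coeff_sum, Finset.mul_sum]
  refine Finset.sum_congr rfl fun i _ => ?_
  rw [coeff_scaleByFactorial, coeff_pderiv_pderiv, ← Nat.cast_prod, ← Nat.cast_prod,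
    Finsupp.prod_factorial_add_single_two]
  push_cast
  ring

theorem exists_le_one_of_mem_support_sigmaSq_mul {n : ℕ} {P : MvPolynomial (Fin n) ℂ}
    (hP : ∑ j, pderiv j (pderiv j P) = 0) {d : Fin n →₀ ℕ}
    (hd : d ∈ (sigmaSq n * scaleByFactorial P).support) : ∃ i, d i ≤ 1 := by
  by_contra! h
  have hle : Finsupp.equivFunOnFinite.symm (fun _ => 2) ≤ d := fun i => h i
  rw [mem_support_iff, ← tsub_add_cancel_of_le hle, coeff_add_two_sigmaSq_mul_scaleByFactorial,
    hP, coeff_zero, mul_zero] at hd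
  exact hd rfl

theorem IndepOf.zero {n : ℕ} (i : Fin n) : IndepOf i 0 := by
  simp [IndepOf]

theorem IndepOf.add {n : ℕ} {i : Fin n} {p q : MvPolynomial (Fin n) ℂ} (hp : IndepOf i p)
    (hq : IndepOf i q) : IndepOf i (p + q) := by
  classical
  intro d hd
  rcases Finset.mem_union.mp (support_add hd) with h | h
  exacts [hp d h, hq d h]

theorem indepOf_monomial {n : ℕ} {i : Fin n} {d : Fin n →₀ ℕ} (hd : d i = 0) (c : ℂ) :
    IndepOf i (monomial d c) := fun e he => by
  rwa [Finset.mem_singleton.mp (support_monomial_subset he)]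

def HasIndepDecomposition {n : ℕ} (m : ℕ) (p : MvPolynomial (Fin n) ℂ) : Prop :=
  ∃ Pi Qi : Fin n → MvPolynomial (Fin n) ℂ,
    (∀ i, (Pi i).IsHomogeneous (m + 1) ∧ (Qi i).IsHomogeneous m ∧
      IndepOf i (Pi i) ∧ IndepOf i (Qi i)) ∧
    p = ∑ i, (Pi i + X i * Qi i)

namespace HasIndepDecomposition

variable {n m : ℕ}

theorem zero : HasIndepDecomposition m (0 : MvPolynomial (Fin n) ℂ) :=
  ⟨0, 0, fun i => ⟨isHomogeneous_zero .., isHomogeneous_zero .., .zero i, .zero i⟩, by simp⟩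

theorem add {p q : MvPolynomial (Fin n) ℂ} (hp : HasIndepDecomposition m p)
    (hq : HasIndepDecomposition m q) : HasIndepDecomposition m (p + q) := by
  obtain ⟨Pp, Qp, hPQp, rfl⟩ := hp
  obtain ⟨Pq, Qq, hPQq, rfl⟩ := hq
  refine ⟨Pp + Pq, Qp + Qq, fun i => ?_, ?_⟩
  · obtain ⟨h₁, h₂, h₃, h₄⟩ := hPQp i
    obtain ⟨h₁', h₂', h₃', h₄'⟩ := hPQq i
    exact ⟨h₁.add h₁', h₂.add h₂', h₃.add h₃', h₄.add h₄'⟩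
  · simp only [Pi.add_apply, mul_add, ← Finset.sum_add_distrib]
    exact Finset.sum_congr rfl fun _ _ => by ring

theorem single {i : Fin n} {p q : MvPolynomial (Fin n) ℂ} (hp : p.IsHomogeneous (m + 1))
    (hq : q.IsHomogeneous m) (hpi : IndepOf i p) (hqi : IndepOf i q) :
    HasIndepDecomposition m (p + X i * q) := by
  refine ⟨Pi.single i p, Pi.single i q, fun j => ?_, ?_⟩
  · rcases eq_or_ne j i with rfl | hj
    · simpa using ⟨hp, hq, hpi, hqi⟩
    · simp only [Pi.single_eq_of_ne hj]
      exact ⟨isHomogeneous_zero .., isHomogeneous_zero .., .zero j, .zero j⟩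
  · simp [Finset.sum_add_distrib, Pi.single_apply]

theorem monomial {i : Fin n} {d : Fin n →₀ ℕ} (hdi : d i ≤ 1) (hd : d.degree = m + 1) (c : ℂ) :
    HasIndepDecomposition m (monomial d c) := by
  rcases Nat.le_one_iff_eq_zero_or_eq_one.mp hdi with h0 | h1
  · simpa using single (isHomogeneous_monomial c hd) (isHomogeneous_zero ..)
      (indepOf_monomial h0 c) (.zero i)
  · obtain ⟨e, rfl⟩ : ∃ e, d = Finsupp.single i 1 + e :=
      ⟨d - Finsupp.single i 1, (add_tsub_cancel_of_le (by simpa using h1.ge)).symm⟩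
    have he : e.degree = m := by
      rw [map_add, Finsupp.degree_single] at hd
      omega
    have hei : e i = 0 := by simpa using h1
    simpa [X, monomial_mul] using single (isHomogeneous_zero ..) (isHomogeneous_monomial c he)
      (.zero i) (indepOf_monomial hei c)

end HasIndepDecomposition

theorem hasIndepDecomposition_of_exists_le_one {n m : ℕ} {p : MvPolynomial (Fin n) ℂ}
    (hp : p.IsHomogeneous (m + 1)) (h : ∀ d ∈ p.support, ∃ i, d i ≤ 1) :
    HasIndepDecomposition m p := by
  rw [p.as_sum]
  refine Finset.sum_induction _ _ (fun _ _ => .add) .zero fun d hd => ?_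
  obtain ⟨i, hi⟩ := h d hd
  exact .monomial hi (hp.degree_eq_sum_deg_support hd).symm _

/-- For a harmonic homogeneous polynomial `P` of degree `N` with associated polynomial `Q`,
there exist polynomials `P_î` (homogeneous of degree `N+2n-2`) and `Q_î` (homogeneous of
degree `N+2n-3`), each independent of `ηᵢ`, with
`σ_{n-1}(η²)·Q(η) = σₙ(η)·Σᵢ (P_î + ηᵢ Q_î)`. -/
theorem assocPoly_representation
    (n N : ℕ) (hn : 2 ≤ n) (P : MvPolynomial (Fin n) ℂ)
    (hPhom : P.IsHomogeneous N)
    (hPharm : ∑ j : Fin n, pderiv j (pderiv j P) = 0) :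
    ∃ Pi Qi : Fin n → MvPolynomial (Fin n) ℂ,
      (∀ i, (Pi i).IsHomogeneous (N + (2 * n - 2)) ∧
            (Qi i).IsHomogeneous (N + (2 * n - 3)) ∧
            IndepOf i (Pi i) ∧ IndepOf i (Qi i)) ∧
      sigmaSq n * assocPoly n P = sigmaN n * ∑ i : Fin n, (Pi i + X i * Qi i) := by
  have hdeg : N + (2 * n - 2) = N + (2 * n - 3) + 1 := by omega
  have hS : (sigmaSq n * scaleByFactorial P).IsHomogeneous (N + (2 * n - 3) + 1) := by
    rw [← hdeg, mul_comm]
    exact hPhom.scaleByFactorial.mul (sigmaSq_isHomogeneous n)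
  obtain ⟨Pi, Qi, hPQ, hsum⟩ := hasIndepDecomposition_of_exists_le_one hS
    fun _ => exists_le_one_of_mem_support_sigmaSq_mul hPharm
  refine ⟨Pi, Qi, fun i => hdeg ▸ hPQ i, ?_⟩
  rw [assocPoly_eq_sigmaN_mul, mul_left_comm, hsum]
end

section
/- For every n ≥ 3, the polynomial σ_{n−1}(η²) = Σ_{i=1}^n ∏_{j≠i} η_j² is irreducible in the polynomial ring ℂ[η₁,…,η_n]. For n = 2 it factors as σ_1(η²) = η₁² + η₂² = (η₁ − iη₂)(η₁ + iη₂). -/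
open MvPolynomial

/-!
Singling out `η₀`, the polynomial `σ_{n-1}(η²)` is the quadratic `A η₀² + B` over the remaining
variables, with `A = σ_{n-2}(η²)` and `B = ∏ ηⱼ²`. No `ηⱼ` divides `A` (set `ηⱼ = 0`), so `A` and
`B` are coprime and the quadratic is primitive; a factorization would then consist of two linear
factors in `η₀`, forcing `-AB` to be a square. Specializing `η₀ ↦ t` and all other variables to `1`
turns `-AB` into `-(1 + (n - 2) t²) t²`, which has a simple root and so is not a square in `ℂ[t]`.
-/

open Finset in
theorem Fin.sum_prod_erase_succ {M : Type*} [CommSemiring M] {m : ℕ} (f : Fin (m + 1) → M) :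
    ∑ i, ∏ j ∈ univ.erase i, f j =
      ∏ j : Fin m, f j.succ + f 0 * ∑ i : Fin m, ∏ j ∈ univ.erase i, f j.succ := by
  simp only [← filter_ne', prod_filter, Fin.sum_univ_succ, Fin.prod_univ_succ, mul_sum]
  simp [Fin.succ_ne_zero, (Fin.succ_ne_zero _).symm]

namespace Polynomial

theorem IsPrimitive.isUnit_of_natDegree_eq_zero {R : Type*} [CommSemiring R] {p : R[X]}
    (hp : p.IsPrimitive) (h : p.natDegree = 0) : IsUnit p := by
  rw [eq_C_of_natDegree_eq_zero h] at hp ⊢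
  exact isUnit_C.2 (hp _ dvd_rfl)

variable {R : Type*} [CommRing R] [IsDomain R]

theorem IsRoot.derivative_of_isSquare {p : R[X]} (hp : IsSquare p) {r : R} (hr : p.IsRoot r) :
    p.derivative.IsRoot r := by
  obtain ⟨u, rfl⟩ := hp
  have hu : u.IsRoot r := by simpa [IsRoot] using hr
  simp [← sq, derivative_sq, hu.eq_zero]

theorem not_isSquare_neg_one_add_C_mul_X_sq_mul_X_sq {c r : R} (hr : c * r ^ 2 = -1)
    (h2 : (2 : R) ≠ 0) : ¬IsSquare (-((1 + C c * X ^ 2) * X ^ 2)) := by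
  intro hsq
  have hroot : IsRoot (-((1 + C c * X ^ 2) * X ^ 2)) r := by simp [hr]
  have hder := hroot.derivative_of_isSquare hsq
  simp only [IsRoot, derivative_neg, derivative_mul, derivative_one, derivative_C,
    derivative_X_pow_succ, zero_mul, zero_add, Nat.cast_one, map_add, map_one, pow_one, eval_neg,
    eval_add, eval_mul, eval_C, eval_one, eval_X, eval_pow] at hder
  have hr0 : r ≠ 0 := by rintro rfl; simp at hr
  exact mul_ne_zero h2 hr0 (by linear_combination hder + 4 * r * hr)

theorem irreducible_C_mul_X_sq_add_C {a b : R} (ha : a ≠ 0) (hab : IsRelPrime a b)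
    (hsq : ¬IsSquare (-(a * b))) : Irreducible (C a * X ^ 2 + C b) := by
  have hdeg : (C a * X ^ 2 + C b).natDegree = 2 := by
    rw [natDegree_add_C, natDegree_C_mul_X_pow _ _ ha]
  have hprim : (C a * X ^ 2 + C b).IsPrimitive := fun r hr => by
    have := (C_dvd_iff_dvd_coeff r _).1 hr
    exact hab (by simpa using this 2) (by simpa using this 0)
  refine ⟨not_isUnit_of_natDegree_pos _ (by omega), fun f g hfg => ?_⟩
  have hfg0 : f * g ≠ 0 := hfg ▸ fun h => by simp [h] at hdeg
  have hsum : f.natDegree + g.natDegree = 2 := by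
    rw [← natDegree_mul (left_ne_zero_of_mul hfg0) (right_ne_zero_of_mul hfg0), ← hfg, hdeg]
  by_cases hf : f.natDegree = 0
  · exact .inl ((isPrimitive_of_dvd hprim (Dvd.intro g hfg.symm)).isUnit_of_natDegree_eq_zero hf)
  by_cases hg : g.natDegree = 0
  · exact .inr
      ((isPrimitive_of_dvd hprim (Dvd.intro_left f hfg.symm)).isUnit_of_natDegree_eq_zero hg)
  obtain ⟨f₁, f₀, rfl⟩ := exists_eq_X_add_C_of_natDegree_le_one (p := f) (by omega)
  obtain ⟨g₁, g₀, rfl⟩ := exists_eq_X_add_C_of_natDegree_le_one (p := g) (by omega)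
  have hexp : (C f₁ * X + C f₀) * (C g₁ * X + C g₀) =
      C (f₁ * g₁) * X ^ 2 + C (f₁ * g₀ + f₀ * g₁) * X + C (f₀ * g₀) := by
    simp only [map_add, map_mul]; ring
  rw [hexp] at hfg
  have h2 := congrArg (coeff · 2) hfg
  have h1 := congrArg (coeff · 1) hfg
  have h0 := congrArg (coeff · 0) hfg
  simp only [coeff_add, coeff_C_mul, coeff_X_pow, ↓reduceIte, mul_one, coeff_C_succ, add_zero,
    map_add, coeff_mul_X, OfNat.one_ne_ofNat, mul_zero, coeff_C, zero_add, mul_coeff_zero,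
    OfNat.zero_ne_ofNat, coeff_X, one_ne_zero] at h2 h1 h0
  -- the vanishing `X`-coefficient gives `f₁ g₀ = -f₀ g₁`, hence `-(ab) = (f₀ g₁)²`
  exact absurd ⟨f₀ * g₁, by linear_combination (-b) * h2 - f₁ * g₁ * h0 + f₀ * g₁ * h1⟩ hsq

end Polynomial

theorem map_sigmaSq {n : ℕ} {S F : Type*} [CommSemiring S] [FunLike F (MvPolynomial (Fin n) ℂ) S]
    [RingHomClass F (MvPolynomial (Fin n) ℂ) S] (φ : F) :
    φ (sigmaSq n) = ∑ i, ∏ j ∈ Finset.univ.erase i, φ (X j) ^ 2 := by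
  simp only [sigmaSq, map_sum, map_prod, map_pow]

theorem X_not_dvd_sigmaSq {n : ℕ} (j : Fin n) : ¬X j ∣ sigmaSq n := by
  intro h
  have hj := map_dvd (aeval (Function.update (X : Fin n → MvPolynomial (Fin n) ℂ) j 0)) h
  rw [aeval_X, Function.update_self, zero_dvd_iff, map_sigmaSq,
    Finset.sum_eq_single_of_mem j (Finset.mem_univ j)] at hj
  · refine Finset.prod_ne_zero_iff.2 (fun l hl => ?_) hj
    simp [Function.update_of_ne (Finset.ne_of_mem_erase hl), X_ne_zero]
  · intro i _ hij
    exact Finset.prod_eq_zero (Finset.mem_erase.2 ⟨Ne.symm hij, Finset.mem_univ j⟩) (by simp)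

theorem sigmaSq_ne_zero {n : ℕ} (hn : 0 < n) : sigmaSq n ≠ 0 := fun h =>
  X_not_dvd_sigmaSq ⟨0, hn⟩ (h ▸ dvd_zero _)

theorem isRelPrime_sigmaSq_prod_X_sq (n : ℕ) : IsRelPrime (sigmaSq n) (∏ j, X j ^ 2) :=
  IsRelPrime.prod_right fun j _ =>
    (X_prime.irreducible.isRelPrime_iff_not_dvd.2 (X_not_dvd_sigmaSq j)).symm.pow_right

theorem finSuccEquiv_sigmaSq (m : ℕ) :
    finSuccEquiv ℂ m (sigmaSq (m + 1)) =
      Polynomial.C (sigmaSq m) * Polynomial.X ^ 2 + Polynomial.C (∏ j, X j ^ 2) := by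
  rw [map_sigmaSq, Fin.sum_prod_erase_succ, map_sigmaSq Polynomial.C, map_prod]
  simp only [finSuccEquiv_X_zero, finSuccEquiv_X_succ, map_pow]
  ring

theorem not_isSquare_neg_sigmaSq_mul_prod_X_sq (m : ℕ) :
    ¬IsSquare (-(sigmaSq (m + 2) * ∏ j, X j ^ 2)) := by
  intro h
  obtain ⟨r, hr⟩ := IsAlgClosed.exists_pow_nat_eq (-((m : ℂ) + 1)⁻¹) two_pos
  refine Polynomial.not_isSquare_neg_one_add_C_mul_X_sq_mul_X_sq (c := (m + 1 : ℂ)) (r := r)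
    (by rw [hr]; field_simp) two_ne_zero ?_
  have hψ := h.map (aeval (Fin.cons Polynomial.X 1 : Fin (m + 2) → Polynomial ℂ))
  rw [map_neg, map_mul, map_sigmaSq, Fin.sum_prod_erase_succ, map_prod] at hψ
  simp only [Fin.prod_univ_succ, aeval_X, Fin.cons_zero, Fin.cons_succ, Pi.one_apply, one_pow,
    Finset.prod_const_one, mul_one, Finset.sum_const, Finset.card_univ, Fintype.card_fin,
    nsmul_eq_mul, Nat.cast_add, Nat.cast_one, map_pow] at hψ
  rwa [mul_comm (Polynomial.C _), map_add, map_natCast, map_one]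

theorem sigmaSq_two : sigmaSq 2 = X 0 ^ 2 + X 1 ^ 2 := by
  rw [sigmaSq, Fin.sum_prod_erase_succ]
  simp only [Finset.univ_unique, Fin.default_eq_zero, Finset.prod_singleton, Fin.succ_zero_eq_one,
    Finset.sum_singleton, Finset.erase_singleton, Finset.prod_empty, mul_one]
  ring

/-- For `n ≥ 3` the polynomial `σ_{n-1}(η²)` is irreducible in `ℂ[η₁,…,ηₙ]`, while for
`n = 2` it equals `η₁² + η₂² = (η₁ - iη₂)(η₁ + iη₂)`. -/
theorem sigmaSq_irreducible :
    (∀ n : ℕ, 3 ≤ n → Irreducible (sigmaSq n)) ∧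
    sigmaSq 2 = X 0 ^ 2 + X 1 ^ 2 ∧
    sigmaSq 2 = (X 0 - C Complex.I * X 1) * (X 0 + C Complex.I * X 1) := by
  refine ⟨fun n hn => ?_, sigmaSq_two, ?_⟩
  · obtain ⟨m, rfl⟩ := Nat.exists_eq_add_of_le' hn
    rw [← MulEquiv.irreducible_iff (finSuccEquiv ℂ (m + 2)), finSuccEquiv_sigmaSq]
    exact Polynomial.irreducible_C_mul_X_sq_add_C (sigmaSq_ne_zero (by omega))
      (isRelPrime_sigmaSq_prod_X_sq _) (not_isSquare_neg_sigmaSq_mul_prod_X_sq m)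
  · have hI : (C Complex.I : MvPolynomial (Fin 2) ℂ) ^ 2 = -1 := by
      rw [← map_pow, Complex.I_sq, map_neg, map_one]
    rw [sigmaSq_two]
    linear_combination X 1 ^ 2 * hI
end

section
/- Let R ∈ ℂ[η₁,…,η_n] be of the special form R = Σ_{i=1}^n (η_i P_î + Q_î), where each P_î and Q_î is a polynomial independent of the variable η_i. Then each coefficient R_τ ∈ ℂ[s₁,…,s_n] in the parity decomposition R(η) = Σ_{τ ∈ {0,1}ⁿ} η^τ R_τ(η²) has the special form R_τ = Σ_{i=1}^n S_{τ,i}, where each S_{τ,i} ∈ ℂ[s₁,…,s_n] is independent of the variable s_i. -/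
open MvPolynomial

/-!
The coefficient of `s^d` in `R_τ` is the coefficient of `η^(τ + 2d)` in `R`, since the
exponents `τ + 2d` with `τ ∈ {0,1}ⁿ` are pairwise distinct. Each summand `ηᵢ P_î + Q_î` has
degree at most one in `ηᵢ`, so no monomial of `R` contains every variable at least twice.
Hence every monomial of `R_τ` misses some variable `sᵢ`, and grouping the monomials of `R_τ`
by a missing variable gives the `S_{τ,i}`.
-/

namespace MvPolynomial

variable {σ R : Type*} [CommSemiring R]

theorem exists_sum_restrictSupport_of_forall_exists_eq_zero [Fintype σ] {p : MvPolynomial σ R}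
    (hp : ∀ d ∈ p.support, ∃ i, d i = 0) :
    ∃ S : σ → MvPolynomial σ R,
      (∀ i, S i ∈ restrictSupport R {d | d i = 0}) ∧ p = ∑ i, S i := by
  have hmem : p ∈ ⨆ i, restrictSupport R {d : σ →₀ ℕ | d i = 0} := by
    rw [p.as_sum]
    refine Submodule.sum_mem _ fun d hd => ?_
    obtain ⟨i, hi⟩ := hp d hd
    exact Submodule.mem_iSup_of_mem i ((monomial_mem_restrictSupport R).2 (Or.inl hi))
  obtain ⟨S, hS, rfl⟩ := (Submodule.mem_iSup_iff_exists_finsupp _ p).1 hmem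
  exact ⟨S, hS, Finsupp.sum_fintype _ _ fun _ => rfl⟩

theorem coeff_X_mul_add_eq_zero [DecidableEq σ] {i : σ} {P Q : MvPolynomial σ R}
    (hP : P ∈ restrictSupport R {d | d i = 0}) (hQ : Q ∈ restrictSupport R {d | d i = 0})
    {e : σ →₀ ℕ} (he : 2 ≤ e i) : coeff e (X i * P + Q) = 0 := by
  have hPe : coeff (e - Finsupp.single i 1) P = 0 :=
    notMem_support_iff.1 fun h => by
      have : _ = 0 := hP h
      rw [Finsupp.tsub_apply, Finsupp.single_eq_same] at this
      omega
  have hQe : coeff e Q = 0 := notMem_support_iff.1 fun h => by have : e i = 0 := hQ h; omega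
  rw [coeff_add, coeff_X_mul', hPe, hQe, ite_self, add_zero]

theorem prod_X_pow_eq_monomial_equivFunOnFinite [Fintype σ] (f : σ → ℕ) :
    ∏ i, (X i : MvPolynomial σ R) ^ f i = monomial (Finsupp.equivFunOnFinite.symm f) 1 := by
  rw [prod_X_pow]
  exact congrArg (monomial · 1) (by ext i; exact Finsupp.indicator_of_mem (Finset.mem_univ i) _)

theorem coeff_sum_prod_X_pow_mul_expand_two [Fintype σ] [DecidableEq σ]
    (T : (σ → Fin 2) → MvPolynomial σ R) (τ : σ → Fin 2) (d : σ →₀ ℕ) :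
    coeff (Finsupp.equivFunOnFinite.symm (fun i => (τ i : ℕ)) + 2 • d)
      (∑ τ', (∏ i, X i ^ (τ' i : ℕ)) * expand 2 (T τ')) = coeff d (T τ) := by
  simp_rw [prod_X_pow_eq_monomial_equivFunOnFinite, coeff_sum]
  rw [Finset.sum_eq_single τ (fun τ' _ hτ' => ?_) (by simp), coeff_monomial_mul, one_mul,
    coeff_expand_smul _ two_ne_zero]
  obtain ⟨i, hi⟩ := Function.ne_iff.1 hτ'
  rw [coeff_monomial_mul', ite_eq_right_iff, one_mul]
  intro hle
  -- at a coordinate where `τ'` and `τ` differ, the exponent left for `expand 2` is odd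
  refine coeff_expand_of_not_dvd (i := i) _ ?_
  have hle_i := hle i
  simp only [Finsupp.tsub_apply, Finsupp.add_apply, Finsupp.smul_apply, smul_eq_mul,
    Finsupp.equivFunOnFinite_symm_apply_apply] at hle_i ⊢
  have := Fin.val_ne_of_ne hi
  have := (τ i).isLt
  have := (τ' i).isLt
  omega

end MvPolynomial

theorem indepOf_iff_mem_restrictSupport {n : ℕ} {i : Fin n} {p : MvPolynomial (Fin n) ℂ} :
    IndepOf i p ↔ p ∈ restrictSupport ℂ {d | d i = 0} :=
  Iff.rfl

/-- If `R = Σᵢ (ηᵢ P_î + Q_î)` with `P_î, Q_î` independent of `ηᵢ`, then every coefficient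
`R_τ` of the parity decomposition `R(η) = Σ_{τ ∈ {0,1}ⁿ} η^τ R_τ(η²)` is of the form
`Σᵢ S_{τ,i}` with `S_{τ,i}` independent of `sᵢ`. -/
theorem parity_decomposition_special_form
    (n : ℕ) (R : MvPolynomial (Fin n) ℂ)
    (Pi Qi : Fin n → MvPolynomial (Fin n) ℂ)
    (hPi : ∀ i, IndepOf i (Pi i)) (hQi : ∀ i, IndepOf i (Qi i))
    (hR : R = ∑ i : Fin n, (X i * Pi i + Qi i))
    (T : (Fin n → Fin 2) → MvPolynomial (Fin n) ℂ)
    (hT : R = ∑ τ : Fin n → Fin 2,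
      (∏ i, X i ^ (τ i : ℕ)) * aeval (fun i => (X i) ^ 2) (T τ)) :
    ∀ τ : Fin n → Fin 2, ∃ S : Fin n → MvPolynomial (Fin n) ℂ,
      (∀ i, IndepOf i (S i)) ∧ T τ = ∑ i : Fin n, S i := by
  intro τ
  have hR_coeff : ∀ e : Fin n →₀ ℕ, (∀ i, 2 ≤ e i) → coeff e R = 0 := fun e he => by
    rw [hR, coeff_sum]
    exact Finset.sum_eq_zero fun i _ => coeff_X_mul_add_eq_zero
      (indepOf_iff_mem_restrictSupport.1 (hPi i)) (indepOf_iff_mem_restrictSupport.1 (hQi i))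
      (he i)
  have hT_coeff (d : Fin n →₀ ℕ) :
      coeff (Finsupp.equivFunOnFinite.symm (fun i => (τ i : ℕ)) + 2 • d) R = coeff d (T τ) :=
    hT ▸ coeff_sum_prod_X_pow_mul_expand_two T τ d
  have h_missing : ∀ d ∈ (T τ).support, ∃ i, d i = 0 := by
    intro d hd
    by_contra! hd_pos
    refine mem_support_iff.1 hd ((hT_coeff d).symm.trans (hR_coeff _ fun i => ?_))
    rw [Finsupp.add_apply, Finsupp.smul_apply, smul_eq_mul,
      Finsupp.equivFunOnFinite_symm_apply_apply]
    have := hd_pos i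
    omega
  obtain ⟨S, hS, hsum⟩ := exists_sum_restrictSupport_of_forall_exists_eq_zero h_missing
  exact ⟨S, fun i => indepOf_iff_mem_restrictSupport.2 (hS i), hsum⟩
end

section
/- Let S ∈ ℂ[s₁,…,s_n] and let R ∈ ℂ[η₁,…,η_n] with parity decomposition R(η) = Σ_{τ ∈ {0,1}ⁿ} η^τ R_τ(η²). If S(η²) divides R(η) in ℂ[η₁,…,η_n], then S divides R_τ in ℂ[s₁,…,s_n] for every τ ∈ {0,1}ⁿ. -/
/-!
Every polynomial splits uniquely as `∑_τ X^τ · expand p (A τ)` over `τ : σ → Fin p`, because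
exponent vectors split uniquely by division with remainder modulo `p`; here
`aeval (fun i => X i ^ 2)` is `expand 2`. Writing a quotient `Q` with `R = expand 2 S * Q` in
this form and multiplying by `expand 2 S` gives a second decomposition
`∑_τ X^τ · expand 2 (S * A τ)` of `R`, so uniqueness yields `T τ = S * A τ`.
-/

open MvPolynomial

theorem Nat.not_dvd_mul_add_sub {p k a b : ℕ} (ha : a < p) (hb : b < p) (hab : a ≠ b)
    (hle : b ≤ p * k + a) : ¬ p ∣ p * k + a - b := fun h =>
  hab <| (((Nat.modEq_iff_dvd' hle).2 h).trans
    (Nat.modulus_mul_add_modEq_iff.2 rfl)).eq_of_lt_of_lt hb ha |>.symm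

namespace MvPolynomial

variable {σ R : Type*} [Fintype σ] [CommSemiring R] {p : ℕ}

noncomputable def residueExponent (τ : σ → Fin p) : σ →₀ ℕ :=
  Finsupp.equivFunOnFinite.symm fun i => τ i

@[simp]
lemma residueExponent_apply (τ : σ → Fin p) (i : σ) : residueExponent τ i = τ i := rfl

lemma prod_X_pow_eq_monomial_residueExponent (τ : σ → Fin p) :
    ∏ i, (X i : MvPolynomial σ R) ^ (τ i : ℕ) = monomial (residueExponent τ) 1 := by
  rw [monomial_eq, C_1, one_mul, Finsupp.prod_fintype _ _ fun _ => pow_zero _]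
  rfl

lemma coeff_monomial_residueExponent_mul_expand (hp : p ≠ 0) (τ τ' : σ → Fin p)
    (A : MvPolynomial σ R) (e : σ →₀ ℕ) :
    coeff (p • e + residueExponent τ) (monomial (residueExponent τ') 1 * expand p A)
      = if τ' = τ then coeff e A else 0 := by
  rw [coeff_monomial_mul', one_mul]
  split_ifs with hle hτ hτ
  · subst hτ
    rw [add_tsub_cancel_right, coeff_expand_smul p hp]
  · obtain ⟨i, hi⟩ := Function.ne_iff.1 hτ
    refine coeff_expand_of_not_dvd A (i := i) ?_
    simpa using Nat.not_dvd_mul_add_sub (τ i).isLt (τ' i).isLt (Fin.val_ne_of_ne hi.symm)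
      (by simpa using hle i)
  · exact absurd (hτ ▸ le_add_self) hle
  · rfl

variable [DecidableEq σ]

noncomputable def ofResidueComponents (p : ℕ) (A : (σ → Fin p) → MvPolynomial σ R) :
    MvPolynomial σ R :=
  ∑ τ, monomial (residueExponent τ) 1 * expand p (A τ)

lemma coeff_ofResidueComponents (hp : p ≠ 0) (A : (σ → Fin p) → MvPolynomial σ R)
    (τ : σ → Fin p) (e : σ →₀ ℕ) :
    coeff (p • e + residueExponent τ) (ofResidueComponents p A) = coeff e (A τ) := by
  simp [ofResidueComponents, coeff_sum, coeff_monomial_residueExponent_mul_expand hp]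

lemma ofResidueComponents_injective (hp : p ≠ 0) :
    Function.Injective (ofResidueComponents (σ := σ) (R := R) p) := fun A B h => by
  ext τ e
  rw [← coeff_ofResidueComponents hp, h, coeff_ofResidueComponents hp]

lemma ofResidueComponents_add (A B : (σ → Fin p) → MvPolynomial σ R) :
    ofResidueComponents p (A + B) = ofResidueComponents p A + ofResidueComponents p B := by
  simp only [ofResidueComponents, Pi.add_apply, map_add, mul_add, Finset.sum_add_distrib]

lemma ofResidueComponents_pi_single (τ : σ → Fin p) (a : MvPolynomial σ R) :
    ofResidueComponents p (Pi.single τ a) = monomial (residueExponent τ) 1 * expand p a := by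
  rw [ofResidueComponents, Finset.sum_eq_single τ (fun τ' _ h => by simp [h]) (by simp),
    Pi.single_eq_same]

lemma monomial_mem_range_ofResidueComponents (hp : p ≠ 0) (e : σ →₀ ℕ) (c : R) :
    monomial e c ∈ Set.range (ofResidueComponents (σ := σ) p) := by
  let τ : σ → Fin p := fun i => ⟨e i % p, Nat.mod_lt _ (Nat.pos_of_ne_zero hp)⟩
  let q : σ →₀ ℕ := Finsupp.equivFunOnFinite.symm fun i => e i / p
  refine ⟨Pi.single τ (monomial q c), ?_⟩
  rw [ofResidueComponents_pi_single, expand_monomial, monomial_mul, one_mul]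
  exact congrArg (monomial · c) (Finsupp.ext fun i => Nat.mod_add_div (e i) p)

lemma ofResidueComponents_surjective (hp : p ≠ 0) :
    Function.Surjective (ofResidueComponents (σ := σ) (R := R) p) := fun Q => by
  induction Q using induction_on' with
  | monomial e c => exact monomial_mem_range_ofResidueComponents hp e c
  | add P Q hP hQ =>
    obtain ⟨A, rfl⟩ := hP
    obtain ⟨B, rfl⟩ := hQ
    exact ⟨A + B, ofResidueComponents_add A B⟩

lemma expand_mul_ofResidueComponents (S : MvPolynomial σ R)
    (A : (σ → Fin p) → MvPolynomial σ R) :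
    expand p S * ofResidueComponents p A = ofResidueComponents p (fun τ => S * A τ) := by
  simp only [ofResidueComponents, Finset.mul_sum, map_mul, mul_left_comm]

end MvPolynomial

/-- If `S(η²)` divides `R(η)` in `ℂ[η₁,…,ηₙ]`, then `S` divides every coefficient `R_τ` of
the parity decomposition `R(η) = Σ_{τ ∈ {0,1}ⁿ} η^τ R_τ(η²)`. -/
theorem dvd_parity_components
    (n : ℕ) (S R : MvPolynomial (Fin n) ℂ)
    (T : (Fin n → Fin 2) → MvPolynomial (Fin n) ℂ)
    (hT : R = ∑ τ : Fin n → Fin 2,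
      (∏ i, X i ^ (τ i : ℕ)) * aeval (fun i => (X i) ^ 2) (T τ))
    (hdvd : aeval (fun i => (X i) ^ 2) S ∣ R) :
    ∀ τ : Fin n → Fin 2, S ∣ T τ := by
  have hR : R = ofResidueComponents 2 T := by
    simp only [hT, prod_X_pow_eq_monomial_residueExponent]
    rfl
  obtain ⟨Q, hQ⟩ := hdvd
  obtain ⟨A, rfl⟩ := ofResidueComponents_surjective two_ne_zero Q
  have hTA : T = fun τ => S * A τ := by
    apply ofResidueComponents_injective two_ne_zero
    rw [← hR, ← expand_mul_ofResidueComponents]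
    exact hQ
  exact fun τ => ⟨A τ, congrFun hTA τ⟩
end

section
/- Let n ≥ 2 and let T ∈ ℂ[s₁,…,s_n] have the form T = Σ_{i=1}^n T_î, where each T_î is a polynomial independent of the variable s_i. If σ_{n−1}(s)² divides T in ℂ[s₁,…,s_n], then T = 0. -/
/-!
Call a polynomial deficient if each of its monomials misses some variable; a sum `Σ T_î` is
deficient. As a polynomial in `s₀`,
`sigmaElem (n + 1) = sigmaElem n (s₁, …, sₙ) · s₀ + s₁ ⋯ sₙ`, so the leading `s₀`-coefficient of
`T = (sigmaElem (n + 1))² Q` is `(sigmaElem n)² · lc(Q)`; it is deficient because the `s₀`-degree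
is positive, which reduces `n + 1` to `n`. For two variables `sigmaElem 2 = s₀ + s₁` and
`T = A(s₀) + B(s₁)`: then `∂₀T = A'(s₀)` is divisible by `s₀ + s₁`, hence zero, likewise `∂₁T`,
so `T` is a constant vanishing at `(1, -1)`.
-/

open MvPolynomial

/-- The `(n-1)`-st elementary symmetric polynomial `σ_{n-1}(s) = Σᵢ ∏_{j≠i} sⱼ`. -/
noncomputable def sigmaElem (n : ℕ) : MvPolynomial (Fin n) ℂ :=
  ∑ i : Fin n, ∏ j ∈ Finset.univ.erase i, X j

section PartialDerivatives

variable {σ R : Type*} [CommRing R] {i j : σ} {p : MvPolynomial σ R}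

theorem eq_zero_of_X_add_X_dvd (hij : i ≠ j) (hp : ∀ d ∈ p.support, d j = 0)
    (h : X i + X j ∣ p) : p = 0 := by
  classical
  -- substituting `-X i` for `X j` kills `X i + X j` and fixes `p`
  let f : MvPolynomial σ R →+* MvPolynomial σ R :=
    (aeval (Function.update X j (-X i))).toRingHom
  have hfix : f p = p := by
    refine hom_congr_vars (f₂ := RingHom.id _) (by ext; simp [f]) (fun k hk _ => ?_) rfl
    have hkj : k ≠ j := by
      rintro rfl
      obtain ⟨d, hd, hkd⟩ := (mem_vars_iff_mem_support k).1 hk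
      exact Finsupp.mem_support_iff.1 hkd (hp d hd)
    simp [f, Function.update_of_ne hkj]
  obtain ⟨q, rfl⟩ := h
  rw [← hfix, map_mul]
  simp [f, hij]

theorem dvd_pderiv_sq_mul (a q : MvPolynomial σ R) : a ∣ pderiv i (a ^ 2 * q) :=
  ⟨2 * pderiv i a * q + a * pderiv i q, by rw [pderiv_mul, pderiv_pow]; ring⟩

theorem apply_eq_zero_of_mem_support_pderiv (hij : i ≠ j)
    (hp : ∀ d ∈ p.support, d i = 0 ∨ d j = 0) : ∀ d ∈ (pderiv i p).support, d j = 0 := by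
  intro d hd
  rw [mem_support_iff, coeff_pderiv] at hd
  simpa [Finsupp.single_apply, hij, hij.symm] using
    hp _ (mem_support_iff.2 (left_ne_zero_of_mul hd))

theorem pderiv_eq_zero_of_X_add_X_sq_dvd (hij : i ≠ j)
    (hp : ∀ d ∈ p.support, d i = 0 ∨ d j = 0) (h : (X i + X j) ^ 2 ∣ p) :
    pderiv i p = 0 := by
  obtain ⟨q, rfl⟩ := h
  exact eq_zero_of_X_add_X_dvd hij (apply_eq_zero_of_mem_support_pderiv hij hp)
    (dvd_pderiv_sq_mul _ _)

theorem eq_C_of_forall_pderiv_eq_zero [IsDomain R] [CharZero R] (h : ∀ i, pderiv i p = 0) :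
    p = C (coeff 0 p) := by
  classical
  ext m
  rcases eq_or_ne m 0 with rfl | hm
  · simp
  obtain ⟨i, hi⟩ : ∃ i, m i ≠ 0 := by simpa [Finsupp.ext_iff] using hm
  have hcoeff := congrArg (coeff (m - Finsupp.single i 1)) (h i)
  rw [coeff_pderiv, tsub_add_cancel_of_le (Finsupp.single_le_iff.2 (Nat.one_le_iff_ne_zero.2 hi)),
    coeff_zero] at hcoeff
  rw [coeff_C, if_neg (Ne.symm hm)]
  exact (mul_eq_zero.1 hcoeff).resolve_right (Nat.cast_add_one_ne_zero _)

end PartialDerivatives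

theorem Fin.prod_univ_erase_zero {M : Type*} [CommMonoid M] {n : ℕ} (f : Fin (n + 1) → M) :
    ∏ j ∈ Finset.univ.erase 0, f j = ∏ j : Fin n, f j.succ := by
  rw [Fin.univ_succ, Finset.erase_cons, Finset.prod_map]
  rfl

theorem Fin.prod_univ_erase_succ {M : Type*} [CommMonoid M] {n : ℕ} (f : Fin (n + 1) → M)
    (i : Fin n) :
    ∏ j ∈ Finset.univ.erase i.succ, f j = f 0 * ∏ j ∈ Finset.univ.erase i, f j.succ := by
  let e : Fin n ↪ Fin (n + 1) := ⟨Fin.succ, Fin.succ_injective n⟩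
  rw [Fin.univ_succ, Finset.erase_cons_of_ne _ (Fin.succ_ne_zero i).symm, Finset.prod_cons,
    show i.succ = e i from rfl, ← Finset.map_erase, Finset.prod_map]
  rfl

theorem sigmaElem_two : sigmaElem 2 = X 0 + X 1 := by
  rw [sigmaElem, Fin.sum_univ_two, Fin.prod_univ_erase_zero, ← Fin.succ_zero_eq_one,
    Fin.prod_univ_erase_succ, Fin.prod_univ_erase_zero, add_comm]
  simp

theorem sigmaElem_ne_zero {n : ℕ} (hn : n ≠ 0) : sigmaElem n ≠ 0 := by
  intro h
  simpa [sigmaElem, hn] using congrArg (eval fun _ => (1 : ℂ)) h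

theorem finSuccEquiv_sigmaElem (n : ℕ) :
    finSuccEquiv ℂ n (sigmaElem (n + 1)) =
      Polynomial.C (sigmaElem n) * Polynomial.X + Polynomial.C (∏ j : Fin n, X j) := by
  simp only [sigmaElem, Fin.sum_univ_succ, Fin.prod_univ_erase_zero, Fin.prod_univ_erase_succ,
    map_add, map_sum, map_mul, map_prod, finSuccEquiv_X_zero, finSuccEquiv_X_succ,
    ← Finset.mul_sum]
  ring

theorem exists_eq_zero_of_mem_support_coeff_finSuccEquiv {R : Type*} [CommSemiring R] {n : ℕ}
    {p : MvPolynomial (Fin (n + 1)) R} (hp : ∀ d ∈ p.support, ∃ i, d i = 0) {k : ℕ}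
    (hk : k ≠ 0) : ∀ m ∈ ((finSuccEquiv R n p).coeff k).support, ∃ i, m i = 0 := by
  intro m hm
  obtain ⟨i, hi⟩ := hp _ (mem_support_coeff_finSuccEquiv.1 hm)
  cases i using Fin.cases with
  | zero => exact absurd hi hk
  | succ i => exact ⟨i, hi⟩

theorem eq_zero_of_sigmaElem_two_sq_dvd {T : MvPolynomial (Fin 2) ℂ}
    (hT : ∀ d ∈ T.support, ∃ i, d i = 0) (h : sigmaElem 2 ^ 2 ∣ T) : T = 0 := by
  rw [sigmaElem_two] at h
  have hT01 : ∀ d ∈ T.support, d 0 = 0 ∨ d 1 = 0 := fun d hd => by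
    obtain ⟨i, hi⟩ := hT d hd
    fin_cases i <;> simp_all
  have hconst : T = C (coeff 0 T) := eq_C_of_forall_pderiv_eq_zero fun i => by
    fin_cases i
    · exact pderiv_eq_zero_of_X_add_X_sq_dvd (by decide) hT01 h
    · exact pderiv_eq_zero_of_X_add_X_sq_dvd (by decide) (fun d hd => (hT01 d hd).symm)
        (by rwa [add_comm] at h)
  obtain ⟨Q, hQ⟩ := h
  have hc : coeff 0 T = 0 := by
    simpa using congrArg (eval ![(1 : ℂ), -1]) (hconst.symm.trans hQ)
  rw [hconst, hc, map_zero]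

theorem eq_zero_of_sigmaElem_sq_dvd_of_forall_mem_support {n : ℕ} (hn : 2 ≤ n)
    {T : MvPolynomial (Fin n) ℂ} (hT : ∀ d ∈ T.support, ∃ i, d i = 0)
    (h : sigmaElem n ^ 2 ∣ T) : T = 0 := by
  induction n, hn using Nat.le_induction with
  | base => exact eq_zero_of_sigmaElem_two_sq_dvd hT h
  | succ n hn ih =>
    obtain ⟨Q, rfl⟩ := h
    by_contra hne
    set φ := finSuccEquiv ℂ n
    have hQ : φ Q ≠ 0 := by simpa [φ] using right_ne_zero_of_mul hne
    have hσ : sigmaElem n ≠ 0 := sigmaElem_ne_zero (by omega)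
    have hs : φ (sigmaElem (n + 1)) = _ := finSuccEquiv_sigmaElem n
    have hs1 : (φ (sigmaElem (n + 1))).natDegree = 1 := hs ▸ Polynomial.natDegree_linear hσ
    have hs0 : φ (sigmaElem (n + 1)) ≠ 0 :=
      Polynomial.ne_zero_of_natDegree_gt (n := 0) (by omega)
    have hdeg : (φ (sigmaElem (n + 1) ^ 2 * Q)).natDegree = 2 + (φ Q).natDegree := by
      rw [map_mul, map_pow, Polynomial.natDegree_mul (pow_ne_zero 2 hs0) hQ,
        Polynomial.natDegree_pow, hs1]
    have hlc : (φ (sigmaElem (n + 1) ^ 2 * Q)).leadingCoeff =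
        sigmaElem n ^ 2 * (φ Q).leadingCoeff := by
      rw [map_mul, map_pow, Polynomial.leadingCoeff_mul, Polynomial.leadingCoeff_pow, hs,
        Polynomial.leadingCoeff_linear hσ]
    have hlc0 := ih (exists_eq_zero_of_mem_support_coeff_finSuccEquiv hT (k := _)
      (by omega : (φ (sigmaElem (n + 1) ^ 2 * Q)).natDegree ≠ 0)) ⟨_, hlc⟩
    exact mul_ne_zero (pow_ne_zero 2 hσ) (Polynomial.leadingCoeff_ne_zero.2 hQ) (hlc ▸ hlc0)

theorem exists_eq_zero_of_mem_support_sum {n : ℕ} {Ti : Fin n → MvPolynomial (Fin n) ℂ}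
    (hTi : ∀ i, IndepOf i (Ti i)) : ∀ d ∈ (∑ i, Ti i).support, ∃ i, d i = 0 := by
  classical
  intro d hd
  obtain ⟨i, -, hdi⟩ := Finset.mem_biUnion.1 (support_sum hd)
  exact ⟨i, hTi i d hdi⟩

/-- If `T = Σᵢ T_î` with each `T_î` independent of `sᵢ`, and `σ_{n-1}(s)²` divides `T`,
then `T = 0`. -/
theorem eq_zero_of_sigmaElem_sq_dvd
    (n : ℕ) (hn : 2 ≤ n) (T : MvPolynomial (Fin n) ℂ)
    (Ti : Fin n → MvPolynomial (Fin n) ℂ)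
    (hTi : ∀ i, IndepOf i (Ti i)) (hT : T = ∑ i : Fin n, Ti i)
    (hdvd : (sigmaElem n) ^ 2 ∣ T) : T = 0 :=
  eq_zero_of_sigmaElem_sq_dvd_of_forall_mem_support hn
    (hT ▸ exists_eq_zero_of_mem_support_sum hTi) hdvd
end

section
/- Let f ∈ ℂ[x] and g ∈ ℂ[y] be single-variable polynomials and consider T(x,y) = f(x) + g(y) ∈ ℂ[x,y]. If (x + y)² divides T in ℂ[x,y], then T = 0. -/
/-!
Restricting to the line `y = -x` kills every multiple of `x + y`. Since `(x + y)²` divides `T`,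
`x + y` divides `∂T/∂x = f'(x)`, so `f'` vanishes on that line, i.e. `f' = 0`; symmetrically
`g' = 0`. Hence `T` is a constant divisible by `x + y`, so `T = 0`.
-/

open MvPolynomial

theorem Derivation.pow_dvd_apply_of_pow_succ_dvd {R A : Type*} [CommSemiring R] [CommSemiring A]
    [Algebra R A] (D : Derivation R A A) {a b : A} {n : ℕ} (h : a ^ (n + 1) ∣ b) :
    a ^ n ∣ D b := by
  obtain ⟨c, rfl⟩ := h
  rw [D.leibniz, D.leibniz_pow, Nat.add_sub_cancel]
  exact Dvd.intro (a * D c + (n + 1) * c * D a) <| by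
    simp only [smul_eq_mul, nsmul_eq_mul]
    push_cast
    ring

namespace MvPolynomial

variable {R σ : Type*} [CommRing R] [DecidableEq σ]

/-- Restriction of a polynomial to the line on which `x i = t` and every other variable is `-t`. -/
noncomputable def restrictAntidiagonal (i : σ) : MvPolynomial σ R →ₐ[R] Polynomial R :=
  aeval fun k => if k = i then Polynomial.X else -Polynomial.X

theorem restrictAntidiagonal_aeval_X_self (i : σ) (f : Polynomial R) :
    restrictAntidiagonal i (Polynomial.aeval (X i) f) = f := by
  simp [restrictAntidiagonal, ← Polynomial.aeval_algHom_apply]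

theorem restrictAntidiagonal_eq_zero_of_dvd {i j : σ} (hij : i ≠ j) {p : MvPolynomial σ R}
    (h : X i + X j ∣ p) : restrictAntidiagonal i p = 0 := by
  obtain ⟨q, rfl⟩ := h
  simp [restrictAntidiagonal, hij.symm]

theorem derivative_eq_zero_of_sq_dvd_aeval_add_aeval {i j : σ} (hij : i ≠ j)
    {f g : Polynomial R} (h : (X i + X j : MvPolynomial σ R) ^ 2 ∣
      Polynomial.aeval (X i) f + Polynomial.aeval (X j) g) :
    Polynomial.derivative f = 0 := by
  have hpderiv : pderiv i (Polynomial.aeval (X i : MvPolynomial σ R) f +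
      Polynomial.aeval (X j) g) = Polynomial.aeval (X i) (Polynomial.derivative f) := by
    simp [pderiv_X, hij.symm]
  have hdvd : (X i + X j : MvPolynomial σ R) ∣
      Polynomial.aeval (X i) (Polynomial.derivative f) := by
    simpa only [pow_one, hpderiv] using (pderiv i).pow_dvd_apply_of_pow_succ_dvd (n := 1) h
  rw [← restrictAntidiagonal_aeval_X_self i (Polynomial.derivative f)]
  exact restrictAntidiagonal_eq_zero_of_dvd hij hdvd

end MvPolynomial

/-- If `(x+y)²` divides `f(x) + g(y)` in `ℂ[x,y]`, where `f` and `g` are single-variable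
polynomials, then `f(x) + g(y) = 0`. -/
theorem eq_zero_of_sq_dvd_add
    (f g : Polynomial ℂ) (T : MvPolynomial (Fin 2) ℂ)
    (hT : T = Polynomial.aeval (X 0 : MvPolynomial (Fin 2) ℂ) f +
      Polynomial.aeval (X 1 : MvPolynomial (Fin 2) ℂ) g)
    (hdvd : (X 0 + X 1) ^ 2 ∣ T) : T = 0 := by
  subst hT
  have hf := derivative_eq_zero_of_sq_dvd_aeval_add_aeval (by decide) hdvd
  have hg := derivative_eq_zero_of_sq_dvd_aeval_add_aeval (by decide : (1 : Fin 2) ≠ 0)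
    (f := g) (g := f) (by rwa [add_comm (X 1), add_comm (Polynomial.aeval _ g)])
  have hconst : Polynomial.aeval (X 0 : MvPolynomial (Fin 2) ℂ) f +
      Polynomial.aeval (X 1) g = C (f.coeff 0 + g.coeff 0) := by
    rw [Polynomial.eq_C_of_derivative_eq_zero hf, Polynomial.eq_C_of_derivative_eq_zero hg]
    simp [C_add]
  have hsum : f.coeff 0 + g.coeff 0 = 0 := by
    have := restrictAntidiagonal_eq_zero_of_dvd (R := ℂ) (by decide : (0 : Fin 2) ≠ 1)
      (dvd_trans (dvd_pow_self _ two_ne_zero) (hconst ▸ hdvd))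
    rwa [← algebraMap_eq, AlgHom.commutes, Polynomial.algebraMap_eq, Polynomial.C_eq_zero] at this
  rw [hconst, hsum, C_0]
end

section
/- Let M ⊂ ℝⁿ be a compact smoothly embedded submanifold of dimension n−k, where 1 ≤ k ≤ n, and let σ denote the (n−k)-dimensional Hausdorff measure restricted to M. Let (χ_ε)_{ε ∈ (0,1]} be a family of ε-mollifiers on ℝⁿ × ℝⁿ. Then there exist constants C > 0 and ε₀ ∈ (0,1] such that for all ε ∈ (0, ε₀): sup_{x ∈ ℝⁿ} ∫_M |χ_ε(x, m)| dσ(m) ≤ C ε^{−k}. -/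
open MeasureTheory
open scoped ENNReal NNReal

/-- A family of `ε`-mollifiers on `ℝⁿ × ℝⁿ`, indexed by `ε ∈ (0,1]`: measurable functions
with uniformly bounded `L¹` norms in `y`, satisfying the pointwise decay bounds
`|χ_ε(x,y)| ≤ (C_N/εⁿ)(ε/|x-y|)^N` and
`|∇_y χ_ε(x,y)| ≤ (C_N/ε^{n+1})(ε/|x-y|)^N` for every `N`. -/
structure IsMollifierFamily (n : ℕ) (χ : ℝ → (Fin n → ℝ) → (Fin n → ℝ) → ℂ) : Prop where
  measurable : ∀ ε ∈ Set.Ioc (0 : ℝ) 1, Measurable (Function.uncurry (χ ε))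
  l1_bound : ∃ C₀ : ℝ, ∀ ε ∈ Set.Ioc (0 : ℝ) 1, ∀ x,
    (∫⁻ y, (‖χ ε x y‖₊ : ℝ≥0∞)) ≤ ENNReal.ofReal C₀
  decay : ∀ N : ℕ, ∃ C : ℝ, ∀ ε ∈ Set.Ioc (0 : ℝ) 1, ∀ x y,
    ‖χ ε x y‖ * ‖x - y‖ ^ N ≤ C / ε ^ n * ε ^ N
  grad_decay : ∀ N : ℕ, ∃ C : ℝ, ∀ ε ∈ Set.Ioc (0 : ℝ) 1, ∀ x y,
    ‖fderiv ℝ (χ ε x) y‖ * ‖x - y‖ ^ N ≤ C / ε ^ (n + 1) * ε ^ N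

/-- `M ⊆ ℝⁿ` is a smoothly embedded submanifold of codimension `k` (dimension `n - k`):
locally it is a regular level set of a smooth submersion into `ℝᵏ`. -/
def IsSmoothSubmanifoldOfCodim (n k : ℕ) (M : Set (Fin n → ℝ)) : Prop :=
  ∀ x ∈ M, ∃ (U : Set (Fin n → ℝ)) (f : (Fin n → ℝ) → (Fin k → ℝ)),
    IsOpen U ∧ x ∈ U ∧ ContDiffOn ℝ (⊤ : ℕ∞) f U ∧
    M ∩ U = {y ∈ U | f y = 0} ∧
    ∀ y ∈ M ∩ U, Function.Surjective (fderiv ℝ f y)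

/-! Near each of its points `M` is, by the implicit function theorem, the image of a subset of
`ℝⁿ⁻ᵏ` under a map that is Lipschitz on that subset and has a Lipschitz left inverse, so
`σ(M ∩ B(x, r)) ≤ A rⁿ⁻ᵏ` for every ball; by compactness finitely many such charts cover `M`.
Cutting `M` into the dyadic shells `2ʲ⁻¹ε < |m - x| ≤ 2ʲε`, the decay bound of order `n - k + 1`
makes the shells contribute `≲ ε⁻ⁿ (2ʲε)ⁿ⁻ᵏ 2⁻ʲ⁽ⁿ⁻ᵏ⁺¹⁾ = ε⁻ᵏ 2⁻ʲ`, which sums to `≲ ε⁻ᵏ`. -/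

open Metric Set Filter Topology

/-- Upper Ahlfors `d`-regularity of `μ` with constant `A`. -/
def UpperRegularWith {X : Type*} [PseudoMetricSpace X] [MeasurableSpace X] (A : ℝ≥0) (d : ℕ)
    (μ : Measure X) : Prop :=
  ∀ x r, 0 ≤ r → μ (closedBall x r) ≤ A * ENNReal.ofReal r ^ d

theorem upperRegularWith_hausdorffMeasure_pi (d : ℕ) :
    UpperRegularWith (2 ^ d) d (μH[d] : Measure (Fin d → ℝ)) := by
  intro x r hr
  have hvol : (μH[d] : Measure (Fin d → ℝ)) = volume := by
    simpa using hausdorffMeasure_pi_real (ι := Fin d)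
  rw [hvol, Real.volume_pi_closedBall _ hr, Fintype.card_fin, mul_pow,
    ENNReal.ofReal_mul (by positivity), ENNReal.ofReal_pow hr]
  norm_num

theorem UpperRegularWith.hausdorffMeasure_restrict_of_leftInvOn
    {X Y : Type*} [MetricSpace X] [MeasurableSpace X] [BorelSpace X]
    [MetricSpace Y] [MeasurableSpace Y] [BorelSpace Y] {d : ℕ} {A : ℝ≥0}
    (hY : UpperRegularWith A d (μH[d] : Measure Y)) {S : Set X} {ψ : X → Y} {Φ : Y → X}
    {L K : ℝ≥0} (hψ : LipschitzWith L ψ) (hΦ : LipschitzOnWith K Φ (ψ '' S))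
    (hinv : LeftInvOn Φ ψ S) :
    UpperRegularWith (K ^ d * A * L ^ d) d ((μH[d] : Measure X).restrict S) := by
  intro x r hr
  set T := closedBall x r ∩ S
  have hT : T ⊆ Φ '' (ψ '' T) := fun y hy => ⟨ψ y, mem_image_of_mem ψ hy, hinv hy.2⟩
  have hψT : ψ '' T ⊆ closedBall (ψ x) (L * r) := by
    rintro _ ⟨y, hy, rfl⟩
    exact (hψ.dist_le_mul y x).trans (by gcongr; exact hy.1)
  rw [Measure.restrict_apply measurableSet_closedBall]
  calc μH[d] T ≤ μH[d] (Φ '' (ψ '' T)) := measure_mono hT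
    _ ≤ K ^ d * μH[d] (ψ '' T) := by
      simpa only [ENNReal.rpow_natCast] using
        (hΦ.mono (image_mono inter_subset_right)).hausdorffMeasure_image_le d.cast_nonneg
    _ ≤ K ^ d * (A * ENNReal.ofReal (L * r) ^ d) := by
      gcongr
      exact (measure_mono hψT).trans (hY _ _ (by positivity))
    _ = ↑(K ^ d * A * L ^ d) * ENNReal.ofReal r ^ d := by
      rw [ENNReal.ofReal_mul L.coe_nonneg, ENNReal.ofReal_coe_nnreal, mul_pow]
      push_cast
      ring

theorem upperRegularWith_hausdorffMeasure_finrank (E : Type*) [NormedAddCommGroup E]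
    [NormedSpace ℝ E] [MeasurableSpace E] [BorelSpace E] [FiniteDimensional ℝ E] :
    ∃ A, UpperRegularWith A (Module.finrank ℝ E) (μH[Module.finrank ℝ E] : Measure E) := by
  set d := Module.finrank ℝ E
  let e : E ≃L[ℝ] (Fin d → ℝ) := .ofFinrankEq (Module.finrank_fin_fun ℝ).symm
  have h := (upperRegularWith_hausdorffMeasure_pi d).hausdorffMeasure_restrict_of_leftInvOn
    (S := univ) (e : E →L[ℝ] (Fin d → ℝ)).lipschitz
    ((e.symm : (Fin d → ℝ) →L[ℝ] E).lipschitz.lipschitzOnWith) fun x _ => e.symm_apply_apply x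
  exact ⟨_, by rwa [Measure.restrict_univ] at h⟩

theorem IsCompact.exists_upperRegularWith_restrict {X : Type*} [PseudoMetricSpace X]
    [MeasurableSpace X] [OpensMeasurableSpace X] {μ : Measure X} {d : ℕ} {s : Set X}
    (hs : IsCompact s)
    (hloc : ∀ p ∈ s, ∃ U ∈ 𝓝 p, ∃ A, UpperRegularWith A d (μ.restrict (s ∩ U))) :
    ∃ A, UpperRegularWith A d (μ.restrict s) := by
  choose! U hU A hA using hloc
  obtain ⟨t, hts, hcover⟩ := hs.elim_nhds_subcover U hU
  refine ⟨∑ p ∈ t, A p, fun x r hr => ?_⟩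
  have hsub : closedBall x r ∩ s ⊆ ⋃ p ∈ t, closedBall x r ∩ (s ∩ U p) := fun y hy => by
    obtain ⟨p, hp, hyp⟩ := mem_iUnion₂.1 (hcover hy.2)
    exact mem_iUnion₂.2 ⟨p, hp, hy.1, hy.2, hyp⟩
  rw [Measure.restrict_apply measurableSet_closedBall]
  calc μ (closedBall x r ∩ s) ≤ ∑ p ∈ t, μ (closedBall x r ∩ (s ∩ U p)) :=
        (measure_mono hsub).trans (measure_biUnion_finset_le t _)
    _ ≤ ∑ p ∈ t, A p * ENNReal.ofReal r ^ d :=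
        Finset.sum_le_sum fun p hp => by
          simpa only [Measure.restrict_apply measurableSet_closedBall] using
            hA p (hts p hp) x r hr
    _ = ↑(∑ p ∈ t, A p) * ENNReal.ofReal r ^ d := by
        rw [← Finset.sum_mul, ENNReal.ofNNReal_finsetSum]

theorem HasStrictFDerivAt.exists_lipschitz_leftInvOn_levelSet {𝕜 : Type*}
    [NontriviallyNormedField 𝕜] {E F : Type*} [NormedAddCommGroup E] [NormedSpace 𝕜 E]
    [CompleteSpace E] [NormedAddCommGroup F] [NormedSpace 𝕜 F] [CompleteSpace F]
    {f : E → F} {f' : E →L[𝕜] F} {a : E} (hf : HasStrictFDerivAt f f' a)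
    (hf' : f'.range = ⊤) (hker : f'.ker.ClosedComplemented) :
    ∃ (ψ : E → f'.ker) (Φ : f'.ker → E) (L K : ℝ≥0), ∃ U ∈ 𝓝 a, LipschitzWith L ψ ∧
      LipschitzOnWith K Φ (ψ '' (U ∩ f ⁻¹' {f a})) ∧ LeftInvOn Φ ψ (U ∩ f ⁻¹' {f a}) := by
  set π := Classical.choose hker
  set ψ : E → f'.ker := fun x => π (x - a)
  set Φ := hf.implicitFunctionOfComplemented f f' hf' hker
  obtain ⟨K, t, ht, hK⟩ :=
    (hf.to_implicitFunctionOfComplemented hf' hker).exists_lipschitzOnWith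
  have hψt : ∀ᶠ x in 𝓝 a, ψ x ∈ t := by
    have : Continuous ψ := π.continuous.comp (continuous_sub_right a)
    exact this.continuousAt.preimage_mem_nhds (by simpa [ψ] using ht)
  refine ⟨ψ, Φ (f a), ‖π‖₊, K, _, hψt.and (hf.eq_implicitFunctionOfComplemented hf' hker),
    LipschitzWith.of_dist_le_mul fun x y => ?_, hK.mono ?_, ?_⟩
  · simpa [ψ, dist_eq_norm, ← map_sub] using π.le_opNorm (x - y)
  · rintro _ ⟨x, hx, rfl⟩
    exact hx.1.1
  · rintro x ⟨hx, hfx⟩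
    rw [mem_preimage, mem_singleton_iff] at hfx
    obtain ⟨-, hΦx⟩ := hx
    rwa [hf.implicitToOpenPartialHomeomorphOfComplemented_apply, hfx] at hΦx

theorem IsSmoothSubmanifoldOfCodim.exists_nhds_upperRegularWith {n k : ℕ} (hkn : k ≤ n)
    {M : Set (Fin n → ℝ)} (hM : IsSmoothSubmanifoldOfCodim n k M) {p : Fin n → ℝ}
    (hp : p ∈ M) :
    ∃ U ∈ 𝓝 p, ∃ A,
      UpperRegularWith A (n - k) ((μH[(n - k : ℕ)] : Measure _).restrict (M ∩ U)) := by
  obtain ⟨V, f, hV, hpV, hfC, hMV, hsurj⟩ := hM p hp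
  set f' := fderiv ℝ f p
  have hf : HasStrictFDerivAt f f' p :=
    (hfC.contDiffAt (hV.mem_nhds hpV)).hasStrictFDerivAt (by simp)
  have hf' : f'.range = ⊤ := LinearMap.range_eq_top.2 (hsurj p ⟨hp, hpV⟩)
  obtain ⟨ψ, Φ, L, K, U, hU, hψ, hΦ, hinv⟩ := hf.exists_lipschitz_leftInvOn_levelSet hf'
    f'.ker_closedComplemented_of_finiteDimensional_range
  have hrank : Module.finrank ℝ f'.ker = n - k := by
    have := LinearMap.finrank_range_add_finrank_ker (f' : (Fin n → ℝ) →ₗ[ℝ] (Fin k → ℝ))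
    rw [LinearMap.range_eq_top.2 (hsurj p ⟨hp, hpV⟩), finrank_top, Module.finrank_fin_fun,
      Module.finrank_fin_fun] at this
    omega
  obtain ⟨A, hA⟩ := upperRegularWith_hausdorffMeasure_finrank f'.ker
  rw [hrank] at hA
  have hzero : ∀ y ∈ M ∩ V, f y = 0 := fun y hy => (hMV ▸ hy).2
  have hsub : M ∩ (U ∩ V) ⊆ U ∩ f ⁻¹' {f p} := fun y ⟨hyM, hyU, hyV⟩ =>
    ⟨hyU, by simp [hzero y ⟨hyM, hyV⟩, hzero p ⟨hp, hpV⟩]⟩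
  exact ⟨U ∩ V, inter_mem hU (hV.mem_nhds hpV), _,
    hA.hausdorffMeasure_restrict_of_leftInvOn hψ (hΦ.mono (image_mono hsub)) (hinv.mono hsub)⟩

theorem exists_dyadic_mul_le_of_decay {a B ε r : ℝ} (N : ℕ) (hε : 0 < ε) (ha : 0 ≤ a)
    (haB : a ≤ B) (hdecay : a * r ^ N ≤ B * ε ^ N) :
    ∃ j : ℕ, r ≤ 2 ^ j * ε ∧ a * 2 ^ (N * j) ≤ 2 ^ N * B := by
  rcases le_or_gt r ε with hr | hr
  · refine ⟨0, by simpa using hr, ?_⟩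
    simpa using haB.trans (le_mul_of_one_le_left (ha.trans haB) (one_le_pow₀ one_le_two))
  obtain ⟨m, hm, hm'⟩ := exists_nat_pow_near (x := r / ε) ((one_le_div hε).2 hr.le) one_lt_two
  rw [le_div_iff₀ hε] at hm
  rw [div_lt_iff₀ hε] at hm'
  refine ⟨m + 1, hm'.le, ?_⟩
  have : a * 2 ^ (N * m) * ε ^ N ≤ B * ε ^ N := calc
    a * 2 ^ (N * m) * ε ^ N = a * (2 ^ m * ε) ^ N := by ring
    _ ≤ a * r ^ N := by gcongr
    _ ≤ B * ε ^ N := hdecay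
  have := le_of_mul_le_mul_right this (by positivity)
  calc a * 2 ^ (N * (m + 1)) = 2 ^ N * (a * 2 ^ (N * m)) := by ring
    _ ≤ 2 ^ N * B := by gcongr

theorem UpperRegularWith.lintegral_enorm_le_of_decay {X E : Type*} [PseudoMetricSpace X]
    [MeasurableSpace X] [OpensMeasurableSpace X] [SeminormedAddCommGroup E] {ν : Measure X}
    {A : ℝ≥0} {d : ℕ} (hν : UpperRegularWith A d ν) {f : X → E} {x : X} {B ε : ℝ}
    (hε : 0 < ε) (hfB : ∀ y, ‖f y‖ ≤ B)
    (hdecay : ∀ y, ‖f y‖ * dist x y ^ (d + 1) ≤ B * ε ^ (d + 1)) :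
    ∫⁻ y, ‖f y‖ₑ ∂ν ≤ ENNReal.ofReal (2 ^ (d + 2) * A * B * ε ^ d) := by
  have hB : 0 ≤ B := (norm_nonneg _).trans (hfB x)
  set c : ℕ → ℝ≥0∞ := fun j => ENNReal.ofReal (2 ^ (d + 1) * B / 2 ^ ((d + 1) * j))
  have hpt : ∀ y, ‖f y‖ₑ ≤ ∑' j, (closedBall x (2 ^ j * ε)).indicator (fun _ => c j) y := by
    intro y
    obtain ⟨j, hyj, hfj⟩ :=
      exists_dyadic_mul_le_of_decay (d + 1) hε (norm_nonneg _) (hfB y) (hdecay y)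
    refine le_trans ?_ (ENNReal.le_tsum j)
    rw [indicator_of_mem (mem_closedBall'.2 hyj), ← ofReal_norm]
    exact ENNReal.ofReal_le_ofReal ((le_div_iff₀ (by positivity)).2 hfj)
  have hterm : ∀ j : ℕ, c j * (A * ENNReal.ofReal (2 ^ j * ε) ^ d) =
      ENNReal.ofReal (2 ^ (d + 2) * A * B * ε ^ d / 2 / 2 ^ j) := by
    intro j
    rw [← ENNReal.ofReal_coe_nnreal, ← ENNReal.ofReal_pow (by positivity),
      ← ENNReal.ofReal_mul (by positivity), ← ENNReal.ofReal_mul (by positivity)]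
    congr 1
    field_simp
    ring
  calc ∫⁻ y, ‖f y‖ₑ ∂ν
      ≤ ∫⁻ y, ∑' j, (closedBall x (2 ^ j * ε)).indicator (fun _ => c j) y ∂ν :=
        lintegral_mono hpt
    _ = ∑' j, c j * ν (closedBall x (2 ^ j * ε)) := by
        rw [lintegral_tsum fun j =>
          (measurable_const.indicator measurableSet_closedBall).aemeasurable]
        simp only [lintegral_indicator_const measurableSet_closedBall]
    _ ≤ ∑' j : ℕ, ENNReal.ofReal (2 ^ (d + 2) * A * B * ε ^ d / 2 / 2 ^ j) :=
        ENNReal.tsum_le_tsum fun j => (hterm j) ▸ by gcongr; exact hν _ _ (by positivity)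
    _ = ENNReal.ofReal (2 ^ (d + 2) * A * B * ε ^ d) := by
        rw [← ENNReal.ofReal_tsum_of_nonneg (fun j => by positivity) (summable_geometric_two' _),
          tsum_geometric_two']

theorem mollifier_integral_over_submanifold_general
    (n k : ℕ) (hkn : k ≤ n)
    (M : Set (Fin n → ℝ)) (hMc : IsCompact M)
    (hM : IsSmoothSubmanifoldOfCodim n k M)
    (χ : ℝ → (Fin n → ℝ) → (Fin n → ℝ) → ℂ)
    (hχ : IsMollifierFamily n χ) :
    ∃ C > (0 : ℝ), ∃ ε₀ ∈ Set.Ioc (0 : ℝ) 1, ∀ ε : ℝ, 0 < ε → ε < ε₀ →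
      ∀ x : Fin n → ℝ,
        (∫⁻ m in M, (‖χ ε x m‖₊ : ℝ≥0∞) ∂(μH[((n - k : ℕ) : ℝ)])) ≤
          ENNReal.ofReal (C / ε ^ k) := by
  obtain ⟨A, hA⟩ := hMc.exists_upperRegularWith_restrict fun p hp =>
    hM.exists_nhds_upperRegularWith hkn hp
  obtain ⟨C₀, hC₀⟩ := hχ.decay 0
  obtain ⟨C₁, hC₁⟩ := hχ.decay (n - k + 1)
  set D := |C₀| + |C₁|
  refine ⟨2 ^ (n - k + 2) * A * D + 1, by positivity, 1, ⟨one_pos, le_rfl⟩,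
    fun ε hε hε1 x => ?_⟩
  have hεI : ε ∈ Set.Ioc (0 : ℝ) 1 := ⟨hε, hε1.le⟩
  have hεn : ε ^ n = ε ^ (n - k) * ε ^ k := by rw [← pow_add, Nat.sub_add_cancel hkn]
  have hD : ∀ C ≤ D, ∀ N : ℕ, C / ε ^ n * ε ^ N ≤ D / ε ^ n * ε ^ N := fun C hC N => by gcongr
  have hD₀ : C₀ ≤ D := le_add_of_le_of_nonneg (le_abs_self _) (abs_nonneg _)
  have hD₁ : C₁ ≤ D := le_add_of_nonneg_of_le (abs_nonneg _) (le_abs_self _)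
  have hbound := hA.lintegral_enorm_le_of_decay (f := χ ε x) (B := D / ε ^ n) hε
    (fun y => by simpa using (hC₀ ε hεI x y).trans (hD C₀ hD₀ 0))
    (fun y => by simpa [dist_eq_norm] using (hC₁ ε hεI x y).trans (hD C₁ hD₁ _))
  refine (le_of_eq_of_le (by simp [enorm_eq_nnnorm]) hbound).trans
    (ENNReal.ofReal_le_ofReal ?_)
  calc 2 ^ (n - k + 2) * A * (D / ε ^ n) * ε ^ (n - k) = 2 ^ (n - k + 2) * A * D / ε ^ k := by
        rw [hεn]
        field_simp
    _ ≤ (2 ^ (n - k + 2) * A * D + 1) / ε ^ k := by gcongr; linarith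

/-- For a compact smoothly embedded submanifold `M ⊆ ℝⁿ` of dimension `n - k` with surface
measure `σ` (the `(n-k)`-dimensional Hausdorff measure), and a family of `ε`-mollifiers,
`sup_x ∫_M |χ_ε(x,m)| dσ(m) ≤ C ε^{-k}` for all sufficiently small `ε`. -/
theorem mollifier_integral_over_submanifold
    (n k : ℕ) (hk1 : 1 ≤ k) (hkn : k ≤ n)
    (M : Set (Fin n → ℝ)) (hMc : IsCompact M)
    (hM : IsSmoothSubmanifoldOfCodim n k M)
    (χ : ℝ → (Fin n → ℝ) → (Fin n → ℝ) → ℂ)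
    (hχ : IsMollifierFamily n χ) :
    ∃ C > (0 : ℝ), ∃ ε₀ ∈ Set.Ioc (0 : ℝ) 1, ∀ ε : ℝ, 0 < ε → ε < ε₀ →
      ∀ x : Fin n → ℝ,
        (∫⁻ m in M, (‖χ ε x m‖₊ : ℝ≥0∞) ∂(μH[((n - k : ℕ) : ℝ)])) ≤
          ENNReal.ofReal (C / ε ^ k) :=
  mollifier_integral_over_submanifold_general n k hkn M hMc hM χ hχ
end

section
/- Let k ≥ 1 and let P : ℝⁿ → ℝ^k be smooth such that M = P⁻¹({0}) is compact and nonempty and the derivative DP(m) : ℝⁿ → ℝ^k is surjective at every m ∈ M. Then there exist constants δ > 0 and C > 0 such that for every x ∈ ℝⁿ with dist(x, M) ≤ δ: |P(x)| ≥ C · dist(x, M). -/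
/-!
Near a zero `a` of `f` with surjective derivative, the Newton-type iteration behind Mathlib's
`ApproximatesLinearOn.surjOn_closedBall_of_nonlinearRightInverse` (run with a bounded right
inverse of norm `N` of `f' a`) finds a zero of `f` within distance `2 N ‖f x - f a‖` of every `x`
close to `a`. Compactness of the zero set makes the neighbourhood and the constant uniform.
-/

open Metric Set Filter Topology

theorem Metric.mem_cthickening_of_infDist_le {X : Type*} [PseudoMetricSpace X] {s : Set X}
    (hs : s.Nonempty) {x : X} {δ : ℝ} (h : infDist x s ≤ δ) : x ∈ cthickening δ s := by
  rw [mem_cthickening_iff, ← ENNReal.ofReal_toReal (infEDist_ne_top hs)]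
  exact ENNReal.ofReal_le_ofReal h

theorem IsCompact.exists_cthickening_forall_le_mul {X : Type*} [PseudoMetricSpace X] {s : Set X}
    (hs : IsCompact s) {f g : X → ℝ} (hg : ∀ x, 0 ≤ g x)
    (hloc : ∀ x ∈ s, ∃ K, ∀ᶠ y in 𝓝 x, f y ≤ K * g y) :
    ∃ δ > 0, ∃ K > 0, ∀ y ∈ cthickening δ s, f y ≤ K * g y := by
  set U : ℕ → Set X := fun n ↦ interior {y | f y ≤ n * g y}
  have hU_mono : Monotone U := fun m n hmn ↦ interior_mono fun y hy ↦
    hy.trans (mul_le_mul_of_nonneg_right (mod_cast hmn) (hg y))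
  have hcover : s ⊆ ⋃ n, U n := by
    intro x hx
    obtain ⟨K, hK⟩ := hloc x hx
    obtain ⟨n, hn⟩ := exists_nat_ge K
    refine mem_iUnion.2 ⟨n, mem_interior_iff_mem_nhds.2 ?_⟩
    filter_upwards [hK] with y hy using hy.trans (by gcongr; exact hg y)
  obtain ⟨n, hn⟩ := hs.elim_directed_cover U (fun _ ↦ isOpen_interior) hcover hU_mono.directed_le
  obtain ⟨δ, hδ, hδU⟩ := hs.exists_cthickening_subset_open isOpen_interior hn
  refine ⟨δ, hδ, n + 1, by positivity, fun y hy ↦ ?_⟩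
  have hy' : f y ≤ n * g y := interior_subset (s := {y | f y ≤ n * g y}) (hδU hy)
  linarith [hg y]

theorem HasStrictFDerivAt.exists_infDist_preimage_le_of_surj {𝕜 E F : Type*}
    [NontriviallyNormedField 𝕜] [NormedAddCommGroup E] [NormedSpace 𝕜 E] [CompleteSpace E]
    [NormedAddCommGroup F] [NormedSpace 𝕜 F] [CompleteSpace F]
    {f : E → F} {f' : E →L[𝕜] F} {a : E} (hf : HasStrictFDerivAt f f' a) (h : f'.range = ⊤) :
    ∃ K, ∀ᶠ x in 𝓝 a, infDist x (f ⁻¹' {f a}) ≤ K * dist (f x) (f a) := by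
  set f'symm := f'.nonlinearRightInverseOfSurjective h
  set N : ℝ := (f'symm.nnnorm : ℝ)
  have hN₀ : 0 < f'symm.nnnorm := f'.nonlinearRightInverseOfSurjective_nnnorm_pos h
  obtain ⟨s, hs, hfs⟩ := hf.approximates_deriv_on_nhds (c := f'symm.nnnorm⁻¹ / 2)
    (Or.inr (by simpa using hN₀))
  obtain ⟨r, hr, hrs⟩ := Metric.mem_nhds_iff.1 hs
  refine ⟨2 * N, ?_⟩
  have hcont : ContinuousAt (fun x ↦ dist x a + 2 * N * dist (f x) (f a)) a :=
    (continuousAt_id.dist continuousAt_const).add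
      (continuousAt_const.mul (hf.continuousAt.dist continuousAt_const))
  filter_upwards [hcont.eventually (gt_mem_nhds (by simpa using hr))] with x hx
  have hball : closedBall x (2 * N * dist (f x) (f a)) ⊆ s := fun z hz ↦
    hrs (mem_ball.2 (by linarith [dist_triangle z x a, mem_closedBall.1 hz]))
  have hsurj := hfs.surjOn_closedBall_of_nonlinearRightInverse f'symm (by positivity) hball
  -- The image ball has radius `(N⁻¹ - N⁻¹ / 2) * (2 * N * dist (f x) (f a)) = dist (f x) (f a)`.
  obtain ⟨y, hy, hya⟩ := hsurj (show f a ∈ _ by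
    rw [mem_closedBall, dist_comm]; apply le_of_eq; push_cast; field_simp; norm_num [N])
  calc infDist x (f ⁻¹' {f a}) ≤ dist x y := infDist_le_dist_of_mem hya
    _ ≤ 2 * N * dist (f x) (f a) := by rw [dist_comm]; exact hy

theorem norm_ge_dist_of_regular_level_set_general
    (n k : ℕ)
    (P : (Fin n → ℝ) → (Fin k → ℝ)) (hP : ContDiff ℝ (⊤ : ℕ∞) P)
    (hMc : IsCompact (P ⁻¹' {0})) (hMne : (P ⁻¹' {0}).Nonempty)
    (hsurj : ∀ m ∈ P ⁻¹' {0}, Function.Surjective (fderiv ℝ P m)) :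
    ∃ δ > (0 : ℝ), ∃ C > (0 : ℝ), ∀ x : Fin n → ℝ,
      Metric.infDist x (P ⁻¹' {0}) ≤ δ →
      C * Metric.infDist x (P ⁻¹' {0}) ≤ ‖P x‖ := by
  have hloc : ∀ m ∈ P ⁻¹' {0}, ∃ K, ∀ᶠ x in 𝓝 m, infDist x (P ⁻¹' {0}) ≤ K * ‖P x‖ := by
    intro m hm
    have hm0 : P m = 0 := hm
    have hstrict := (hP.contDiffAt (x := m)).hasStrictFDerivAt (by simp)
    simpa [hm0] using hstrict.exists_infDist_preimage_le_of_surj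
      (LinearMap.range_eq_top.2 (hsurj m hm))
  obtain ⟨δ, hδ, K, hK, hle⟩ := hMc.exists_cthickening_forall_le_mul (fun x ↦ norm_nonneg (P x)) hloc
  refine ⟨δ, hδ, K⁻¹, inv_pos.2 hK, fun x hx ↦ ?_⟩
  rw [inv_mul_le_iff₀ hK]
  exact hle x (mem_cthickening_of_infDist_le hMne hx)

/-- If `P : ℝⁿ → ℝᵏ` is smooth, with `M = P⁻¹({0})` compact and nonempty and `DP(m)`
surjective at every `m ∈ M`, then `|P(x)| ≥ C·dist(x, M)` for all `x` with
`dist(x, M) ≤ δ`. -/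
theorem norm_ge_dist_of_regular_level_set
    (n k : ℕ) (hk : 1 ≤ k)
    (P : (Fin n → ℝ) → (Fin k → ℝ)) (hP : ContDiff ℝ (⊤ : ℕ∞) P)
    (hMc : IsCompact (P ⁻¹' {0})) (hMne : (P ⁻¹' {0}).Nonempty)
    (hsurj : ∀ m ∈ P ⁻¹' {0}, Function.Surjective (fderiv ℝ P m)) :
    ∃ δ > (0 : ℝ), ∃ C > (0 : ℝ), ∀ x : Fin n → ℝ,
      Metric.infDist x (P ⁻¹' {0}) ≤ δ →
      C * Metric.infDist x (P ⁻¹' {0}) ≤ ‖P x‖ :=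
  norm_ge_dist_of_regular_level_set_general n k P hP hMc hMne hsurj
end
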